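/- arXiv:0904.4155 — 8 statements merged into one kernel-verified Lean document; each statement's English description precedes it below -/
import Mathlib

section
/- For every real number c ≥ α, the c-th moment of Ω is infinite: E[Ω^c] = ∑_{k=0}^∞ E[(∑_{k'=0}^k B_{k'})^c]·P[κ=k] = ∞, where α = -(log γ)/(log m). -/
/-!
On `{κ = k}` the sum dominates `B k`, which is independent of `κ` and uniform on `[0, L]` with
`L ≥ m ^ k`, so its `c`-th moment is at least `(m ^ k / 2) ^ c / 2`. The part of `E[Ω ^ c]` on
`{κ = k}` is therefore at least `(1 - γ) (γ m ^ c) ^ k / 2 ^ (c + 1)`, and `c ≥ α` says exactly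
that `γ m ^ c ≥ 1`: these terms do not tend to `0`, so their sum is infinite.
-/

open MeasureTheory Finset

open scoped ENNReal

theorem one_le_mul_rpow_of_neg_log_div_log_le {γ m c : ℝ} (hγ : 0 < γ) (hm : 1 < m)
    (hc : -Real.log γ / Real.log m ≤ c) : 1 ≤ γ * m ^ c := by
  have hm_rpow : m ^ (-Real.log γ / Real.log m) = γ⁻¹ := by
    rw [Real.rpow_def_of_pos (zero_lt_one.trans hm), mul_div_cancel₀ _ (Real.log_pos hm).ne',
      Real.exp_neg, Real.exp_log hγ]
  calc (1 : ℝ) = γ * γ⁻¹ := (mul_inv_cancel₀ hγ.ne').symm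
    _ ≤ γ * m ^ c := by
      rw [← hm_rpow]
      exact mul_le_mul_of_nonneg_left (Real.rpow_le_rpow_of_exponent_le hm.le hc) hγ.le

theorem le_geom_weight_mul_rpow {γ m c L : ℝ} (k : ℕ) (hγ0 : 0 < γ) (hγ1 : γ < 1) (hm : 0 < m)
    (hc : 0 ≤ c) (hγm : 1 ≤ γ * m ^ c) (hL : m ^ k ≤ L) :
    (1 - γ) / (2 * 2 ^ c) ≤ (γ ^ k - γ ^ (k + 1)) * ((L / 2) ^ c / 2) := by
  have hmk : (m ^ c) ^ k / 2 ^ c ≤ (L / 2) ^ c := by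
    rw [Real.rpow_pow_comm hm.le, ← Real.div_rpow (by positivity) zero_le_two]
    gcongr
  have hweight : 0 ≤ γ ^ k * (1 - γ) / 2 := by
    have hγ1 := sub_pos.2 hγ1
    positivity
  calc (1 - γ) / (2 * 2 ^ c) ≤ (1 - γ) / (2 * 2 ^ c) * (γ * m ^ c) ^ k :=
        le_mul_of_one_le_right (div_nonneg (sub_pos.2 hγ1).le (by positivity))
          (one_le_pow₀ hγm)
    _ = γ ^ k * (1 - γ) / 2 * ((m ^ c) ^ k / 2 ^ c) := by rw [mul_pow]; ring
    _ ≤ γ ^ k * (1 - γ) / 2 * (L / 2) ^ c := mul_le_mul_of_nonneg_left hmk hweight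
    _ = (γ ^ k - γ ^ (k + 1)) * ((L / 2) ^ c / 2) := by ring

section UniformLaw

variable {S : Type*} [MeasurableSpace S] {μ : Measure S} {X : S → ℝ}

theorem ae_nonneg_of_map_eq_smul_restrict_Icc (hX : AEMeasurable X μ) {a : ℝ≥0∞} {L : ℝ}
    (hmap : μ.map X = a • volume.restrict (Set.Icc 0 L)) : ∀ᵐ x ∂μ, 0 ≤ X x :=
  ae_of_ae_map hX <| hmap ▸ Measure.ae_smul_measure ((ae_restrict_mem measurableSet_Icc).mono
    fun _ hy => hy.1) a

theorem le_lintegral_rpow_of_map_eq_uniform (hX : Measurable X) {L c : ℝ} (hL : 0 < L)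
    (hc : 0 ≤ c) (hmap : μ.map X = (ENNReal.ofReal L)⁻¹ • volume.restrict (Set.Icc 0 L)) :
    ENNReal.ofReal ((L / 2) ^ c / 2) ≤ ∫⁻ x, ENNReal.ofReal (X x ^ c) ∂μ := by
  rw [← lintegral_map (f := fun y => ENNReal.ofReal (y ^ c)) (by fun_prop) hX, hmap,
    lintegral_smul_measure]
  calc ENNReal.ofReal ((L / 2) ^ c / 2)
      = (ENNReal.ofReal L)⁻¹ * (ENNReal.ofReal ((L / 2) ^ c) * ENNReal.ofReal (L - L / 2)) := by
        rw [← ENNReal.ofReal_inv_of_pos hL, ← ENNReal.ofReal_mul (by positivity),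
          ← ENNReal.ofReal_mul (by positivity)]
        congr 1
        field_simp
        ring
    _ ≤ (ENNReal.ofReal L)⁻¹ * ∫⁻ y in Set.Icc (L / 2) L, ENNReal.ofReal (y ^ c) := by
        rw [← Real.volume_Icc, ← setLIntegral_const]
        refine mul_le_mul_right (setLIntegral_mono' measurableSet_Icc fun y hy => ?_) _
        exact ENNReal.ofReal_le_ofReal (Real.rpow_le_rpow (by positivity) hy.1 hc)
    _ ≤ (ENNReal.ofReal L)⁻¹ * ∫⁻ y in Set.Icc 0 L, ENNReal.ofReal (y ^ c) :=
        mul_le_mul_right (lintegral_mono_set (Set.Icc_subset_Icc_left (by positivity))) _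

end UniformLaw

theorem ProbabilityTheory.IndepFun.setLIntegral_preimage_comp {Ω α β : Type*}
    [MeasurableSpace Ω] [MeasurableSpace α] [MeasurableSpace β] {μ : Measure Ω}
    {X : Ω → α} {Y : Ω → β} (h : IndepFun X Y μ) (hX : Measurable X) (hY : Measurable Y)
    {s : Set α} (hs : MeasurableSet s) {g : β → ℝ≥0∞} (hg : Measurable g) :
    ∫⁻ ω in X ⁻¹' s, g (Y ω) ∂μ = μ (X ⁻¹' s) * ∫⁻ ω, g (Y ω) ∂μ := by
  have hind : Measurable (s.indicator (1 : α → ℝ≥0∞)) := measurable_one.indicator hs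
  have hprod : (X ⁻¹' s).indicator (fun ω => g (Y ω)) = (s.indicator 1 ∘ X) * (g ∘ Y) := by
    funext ω
    by_cases hω : X ω ∈ s <;> simp [hω]
  have hone : (X ⁻¹' s).indicator 1 = s.indicator (1 : α → ℝ≥0∞) ∘ X := by
    funext ω
    by_cases hω : X ω ∈ s <;> simp [hω]
  rw [← lintegral_indicator (hX hs), ← lintegral_indicator_one (hX hs), hprod, hone]
  exact lintegral_mul_eq_lintegral_mul_lintegral_of_indepFun (hind.comp hX) (hg.comp hY)
    (h.comp hind hg)

theorem lintegral_eq_top_of_le_setLIntegral_fiber {α β : Type*} [MeasurableSpace α]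
    [MeasurableSpace β] [MeasurableSingletonClass β] [Countable β] [Infinite β]
    {μ : Measure α} {κ : α → β} (hκ : Measurable κ) {f : α → ℝ≥0∞} {ε : ℝ≥0∞} (hε : ε ≠ 0)
    (h : ∀ k, ε ≤ ∫⁻ x in κ ⁻¹' {k}, f x ∂μ) : ∫⁻ x, f x ∂μ = ⊤ := by
  have hfibers : ∫⁻ x, f x ∂μ = ∑' k, ∫⁻ x in κ ⁻¹' {k}, f x ∂μ := by
    rw [← lintegral_iUnion (fun k => hκ (measurableSet_singleton k)) (pairwise_disjoint_fiber κ),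
      ← Set.preimage_iUnion, Set.iUnion_of_singleton, Set.preimage_univ, Measure.restrict_univ]
  rw [hfibers, eq_top_iff, ← ENNReal.tsum_const_eq_top_of_ne_zero (α := β) hε]
  exact ENNReal.tsum_le_tsum h

theorem stmt0_general
    {S : Type*} [MeasurableSpace S] (μ : Measure S)
    (m b0 γ : ℝ) (hm : 1 < m) (hb0 : 1 ≤ b0) (hγ0 : 0 < γ) (hγ : γ < 1 / m)
    (B : ℕ → S → ℝ) (κ : S → ℕ)
    (hBmeas : ∀ k, Measurable (B k)) (hκmeas : Measurable κ)
    (hBunif : ∀ k, Measure.map (B k) μ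
      = (ENNReal.ofReal (2 * b0 * m ^ k - 1))⁻¹ •
          (volume.restrict (Set.Icc (0:ℝ) (2 * b0 * m ^ k - 1))))
    (hκindep : ProbabilityTheory.IndepFun κ (fun x k => B k x) μ)
    (hκdist : ∀ k : ℕ, μ {x | κ x = k} = ENNReal.ofReal (γ ^ k - γ ^ (k + 1)))
    (α : ℝ) (hα : α = -(Real.log γ) / Real.log m)
    (c : ℝ) (hc : α ≤ c) :
    ∫⁻ x, ENNReal.ofReal ((∑ k ∈ Finset.range (κ x + 1), B k x) ^ c) ∂μ = ⊤ := by
  have hm0 : 0 < m := zero_lt_one.trans hm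
  have hγ1 : γ < 1 := hγ.trans ((div_lt_one hm0).2 hm)
  have hγm : 1 ≤ γ * m ^ c := one_le_mul_rpow_of_neg_log_div_log_le hγ0 hm (hα ▸ hc)
  have hc0 : 0 ≤ c := (hα ▸ div_nonneg (neg_nonneg.2 (Real.log_nonpos hγ0.le hγ1.le))
    (Real.log_nonneg hm.le)).trans hc
  have hBnn : ∀ᵐ x ∂μ, ∀ j, 0 ≤ B j x :=
    ae_all_iff.2 fun j => ae_nonneg_of_map_eq_smul_restrict_Icc (hBmeas j).aemeasurable (hBunif j)
  refine lintegral_eq_top_of_le_setLIntegral_fiber hκmeas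
    (ε := ENNReal.ofReal ((1 - γ) / (2 * 2 ^ c)))
    (ENNReal.ofReal_pos.2 (div_pos (sub_pos.2 hγ1) (by positivity))).ne' fun k => ?_
  have hL : m ^ k ≤ 2 * b0 * m ^ k - 1 := by nlinarith [one_le_pow₀ (n := k) hm.le]
  calc ENNReal.ofReal ((1 - γ) / (2 * 2 ^ c))
      ≤ ENNReal.ofReal ((γ ^ k - γ ^ (k + 1)) * (((2 * b0 * m ^ k - 1) / 2) ^ c / 2)) :=
        ENNReal.ofReal_le_ofReal (le_geom_weight_mul_rpow k hγ0 hγ1 hm0 hc0 hγm hL)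
    _ = μ (κ ⁻¹' {k}) * ENNReal.ofReal (((2 * b0 * m ^ k - 1) / 2) ^ c / 2) := by
        rw [ENNReal.ofReal_mul (sub_nonneg.2 (pow_le_pow_of_le_one hγ0.le hγ1.le k.le_succ)),
          ← hκdist k]
        rfl
    _ ≤ μ (κ ⁻¹' {k}) * ∫⁻ x, ENNReal.ofReal (B k x ^ c) ∂μ := by
        gcongr
        exact le_lintegral_rpow_of_map_eq_uniform (hBmeas k) ((pow_pos hm0 k).trans_le hL) hc0
          (hBunif k)
    _ = ∫⁻ x in κ ⁻¹' {k}, ENNReal.ofReal (B k x ^ c) ∂μ :=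
        (hκindep.setLIntegral_preimage_comp hκmeas (measurable_pi_lambda _ hBmeas)
          (measurableSet_singleton k) (g := fun b => ENNReal.ofReal (b k ^ c))
          (by fun_prop)).symm
    _ ≤ _ := setLIntegral_mono_ae' (hκmeas (measurableSet_singleton k)) <|
        hBnn.mono fun x hx (hxk : κ x = k) => ENNReal.ofReal_le_ofReal <|
          Real.rpow_le_rpow (hx k) (single_le_sum (fun j _ => hx j) (by simp [hxk])) hc0

theorem stmt0
    {S : Type*} [MeasurableSpace S] (μ : Measure S) [IsProbabilityMeasure μ]
    (m b0 γ : ℝ) (hm : 1 < m) (hb0 : 1 ≤ b0) (hγ0 : 0 < γ) (hγ : γ < 1 / m)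
    (B : ℕ → S → ℝ) (κ : S → ℕ)
    (hBmeas : ∀ k, Measurable (B k)) (hκmeas : Measurable κ)
    (hBunif : ∀ k, Measure.map (B k) μ
      = (ENNReal.ofReal (2 * b0 * m ^ k - 1))⁻¹ •
          (volume.restrict (Set.Icc (0:ℝ) (2 * b0 * m ^ k - 1))))
    (hBindep : ProbabilityTheory.iIndepFun B μ)
    (hκindep : ProbabilityTheory.IndepFun κ (fun x k => B k x) μ)
    (hκdist : ∀ k : ℕ, μ {x | κ x = k} = ENNReal.ofReal (γ ^ k - γ ^ (k + 1)))
    (α : ℝ) (hα : α = -(Real.log γ) / Real.log m)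
    (c : ℝ) (hc : α ≤ c) :
    ∫⁻ x, ENNReal.ofReal ((∑ k ∈ Finset.range (κ x + 1), B k x) ^ c) ∂μ = ⊤ :=
  stmt0_general μ m b0 γ hm hb0 hγ0 hγ B κ hBmeas hκmeas hBunif hκindep hκdist α hα c hc
end

section
/- For every real c with 1 < c < α, the c-th moment of Ω is finite: E[Ω^c] < ∞. -/
/-!
Since `B k ≤ 2 b₀ m^k`, the sum of the first `κ + 1` backoffs is at most `C m^κ` with
`C = 2 b₀ m / (m - 1)`, so `E[Ω^c] ≤ C^c ∑ₙ (m^c)^n P[κ = n] ≤ C^c ∑ₙ (m^c γ)^n`.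
This geometric series converges because `c < α` means exactly `m^c γ < 1`.
-/

open MeasureTheory Finset
open scoped ENNReal

lemma geom_sum_range_succ_le_mul_pow {m : ℝ} (hm : 1 < m) (n : ℕ) :
    ∑ k ∈ range (n + 1), m ^ k ≤ m / (m - 1) * m ^ n := by
  have hm1 : 0 < m - 1 := by linarith
  rw [geom_sum_eq hm.ne', div_mul_eq_mul_div, div_le_div_iff_of_pos_right hm1, ← pow_succ']
  linarith

lemma sum_range_succ_le_mul_pow {m a : ℝ} (hm : 1 < m) (ha : 0 ≤ a) {f : ℕ → ℝ} {n : ℕ}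
    (hf : ∀ k, f k ≤ a * m ^ k) : ∑ k ∈ range (n + 1), f k ≤ a * (m / (m - 1)) * m ^ n :=
  calc ∑ k ∈ range (n + 1), f k ≤ a * ∑ k ∈ range (n + 1), m ^ k := by
        rw [mul_sum]; exact sum_le_sum fun k _ => hf k
    _ ≤ a * (m / (m - 1) * m ^ n) := by gcongr; exact geom_sum_range_succ_le_mul_pow hm n
    _ = a * (m / (m - 1)) * m ^ n := by ring

lemma rpow_mul_lt_one_of_lt_neg_log_div_log {m γ c : ℝ} (hm : 1 < m) (hγ : 0 < γ)
    (hc : c < -Real.log γ / Real.log m) : m ^ c * γ < 1 := by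
  have hm0 : 0 < m := by linarith
  have hlogm : 0 < Real.log m := Real.log_pos hm
  rw [← Real.log_neg_iff (by positivity), Real.log_mul (by positivity) hγ.ne',
    Real.log_rpow hm0]
  linarith [(lt_div_iff₀ hlogm).1 hc]

lemma ENNReal.tsum_ne_top_of_le_mul_geometric {a : ℕ → ℝ≥0∞} {K r : ℝ≥0∞} (hK : K ≠ ∞)
    (hr : r < 1) (ha : ∀ n, a n ≤ K * r ^ n) : ∑' n, a n ≠ ∞ := by
  refine ne_top_of_le_ne_top ?_ (ENNReal.tsum_le_tsum ha)
  rw [ENNReal.tsum_mul_left, ENNReal.tsum_geometric]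
  exact ENNReal.mul_ne_top hK (ENNReal.inv_ne_top.2 (tsub_pos_of_lt hr).ne')

section

variable {S : Type*} [MeasurableSpace S] {μ : Measure S}

lemma ae_mem_of_map_eq_smul_restrict {β : Type*} [MeasurableSpace β] {X : S → β}
    (hX : AEMeasurable X μ) {ν : Measure β} {s : Set β} (hs : MeasurableSet s) {a : ℝ≥0∞}
    (h : μ.map X = a • ν.restrict s) : ∀ᵐ x ∂μ, X x ∈ s := by
  refine ae_of_ae_map hX ?_
  rw [h]
  exact Measure.ae_smul_measure (ae_restrict_mem hs) a

lemma lintegral_comp_eq_tsum {κ : S → ℕ} (hκ : Measurable κ) (f : ℕ → ℝ≥0∞) :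
    ∫⁻ x, f (κ x) ∂μ = ∑' n, f n * μ {x | κ x = n} := by
  rw [← lintegral_map measurable_from_top hκ, lintegral_countable']
  refine tsum_congr fun n => ?_
  rw [Measure.map_apply hκ (measurableSet_singleton n)]
  rfl

lemma lintegral_ofReal_rpow_mul_pow_ne_top {κ : S → ℕ} (hκ : Measurable κ) {C m γ c : ℝ}
    (hC : 0 ≤ C) (hm : 0 ≤ m) (hγ : 0 ≤ γ) (hκγ : ∀ n, μ {x | κ x = n} ≤ ENNReal.ofReal (γ ^ n))
    (hmγ : m ^ c * γ < 1) :
    ∫⁻ x, ENNReal.ofReal ((C * m ^ κ x) ^ c) ∂μ ≠ ∞ := by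
  rw [lintegral_comp_eq_tsum (f := fun n => ENNReal.ofReal ((C * m ^ n) ^ c)) hκ]
  refine ENNReal.tsum_ne_top_of_le_mul_geometric (K := ENNReal.ofReal (C ^ c))
    (r := ENNReal.ofReal (m ^ c * γ)) ENNReal.ofReal_ne_top
    (ENNReal.ofReal_lt_one.2 hmγ) fun n => ?_
  have hpow : (C * m ^ n) ^ c * γ ^ n = C ^ c * (m ^ c * γ) ^ n := by
    rw [Real.mul_rpow hC (by positivity), ← Real.rpow_natCast, ← Real.rpow_mul hm,
      mul_pow, ← Real.rpow_natCast (m ^ c), ← Real.rpow_mul hm, mul_comm (n : ℝ) c]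
    ring
  calc ENNReal.ofReal ((C * m ^ n) ^ c) * μ {x | κ x = n}
      ≤ ENNReal.ofReal ((C * m ^ n) ^ c) * ENNReal.ofReal (γ ^ n) := by gcongr; exact hκγ n
    _ = ENNReal.ofReal (C ^ c) * ENNReal.ofReal (m ^ c * γ) ^ n := by
      rw [← ENNReal.ofReal_mul (by positivity), hpow, ENNReal.ofReal_mul (by positivity),
        ENNReal.ofReal_pow (by positivity)]

end

theorem stmt1_general
    {S : Type*} [MeasurableSpace S] (μ : Measure S)
    (m b0 γ : ℝ) (hm : 1 < m) (hb0 : 1 ≤ b0) (hγ0 : 0 < γ)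
    (B : ℕ → S → ℝ) (κ : S → ℕ)
    (hBmeas : ∀ k, Measurable (B k)) (hκmeas : Measurable κ)
    (hBunif : ∀ k, Measure.map (B k) μ
      = (ENNReal.ofReal (2 * b0 * m ^ k - 1))⁻¹ •
          (volume.restrict (Set.Icc (0:ℝ) (2 * b0 * m ^ k - 1))))
    (hκdist : ∀ k : ℕ, μ {x | κ x = k} = ENNReal.ofReal (γ ^ k - γ ^ (k + 1)))
    (α : ℝ) (hα : α = -(Real.log γ) / Real.log m)
    (c : ℝ) (hc1 : 1 < c) (hc2 : c < α) :
    ∫⁻ x, ENNReal.ofReal ((∑ k ∈ Finset.range (κ x + 1), B k x) ^ c) ∂μ ≠ ⊤ := by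
  have hBrange : ∀ᵐ x ∂μ, ∀ k, B k x ∈ Set.Icc 0 (2 * b0 * m ^ k - 1) :=
    ae_all_iff.2 fun k =>
      ae_mem_of_map_eq_smul_restrict (hBmeas k).aemeasurable measurableSet_Icc (hBunif k)
  have hΩ_le : ∫⁻ x, ENNReal.ofReal ((∑ k ∈ range (κ x + 1), B k x) ^ c) ∂μ
      ≤ ∫⁻ x, ENNReal.ofReal ((2 * b0 * (m / (m - 1)) * m ^ κ x) ^ c) ∂μ := by
    refine lintegral_mono_ae ?_
    filter_upwards [hBrange] with x hx
    refine ENNReal.ofReal_le_ofReal (Real.rpow_le_rpow (sum_nonneg fun k _ => (hx k).1) ?_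
      (by linarith))
    exact sum_range_succ_le_mul_pow hm (by linarith) fun k => by linarith [(hx k).2]
  have hκ_le : ∀ n, μ {x | κ x = n} ≤ ENNReal.ofReal (γ ^ n) := fun n => by
    rw [hκdist n]
    exact ENNReal.ofReal_le_ofReal (by linarith [pow_pos hγ0 (n + 1)])
  have hm1 : 0 < m - 1 := by linarith
  exact ne_top_of_le_ne_top
    (lintegral_ofReal_rpow_mul_pow_ne_top hκmeas (by positivity) (by linarith) hγ0.le hκ_le
      (rpow_mul_lt_one_of_lt_neg_log_div_log hm hγ0 (hα ▸ hc2))) hΩ_le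

theorem stmt1
    {S : Type*} [MeasurableSpace S] (μ : Measure S) [IsProbabilityMeasure μ]
    (m b0 γ : ℝ) (hm : 1 < m) (hb0 : 1 ≤ b0) (hγ0 : 0 < γ) (hγ : γ < 1 / m)
    (B : ℕ → S → ℝ) (κ : S → ℕ)
    (hBmeas : ∀ k, Measurable (B k)) (hκmeas : Measurable κ)
    (hBunif : ∀ k, Measure.map (B k) μ
      = (ENNReal.ofReal (2 * b0 * m ^ k - 1))⁻¹ •
          (volume.restrict (Set.Icc (0:ℝ) (2 * b0 * m ^ k - 1))))
    (hBindep : ProbabilityTheory.iIndepFun B μ)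
    (hκindep : ProbabilityTheory.IndepFun κ (fun x k => B k x) μ)
    (hκdist : ∀ k : ℕ, μ {x | κ x = k} = ENNReal.ofReal (γ ^ k - γ ^ (k + 1)))
    (α : ℝ) (hα : α = -(Real.log γ) / Real.log m) (hα1 : 1 < α)
    (c : ℝ) (hc1 : 1 < c) (hc2 : c < α) :
    ∫⁻ x, ENNReal.ofReal ((∑ k ∈ Finset.range (κ x + 1), B k x) ^ c) ∂μ ≠ ⊤ :=
  stmt1_general μ m b0 γ hm hb0 hγ0 B κ hBmeas hκmeas hBunif hκdist α hα c hc1 hc2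
end

section
/- Ω is wide-sense heavy-tailed: its moment generating function satisfies E[e^{tΩ}] = ∞ for all t > 0. -/
/-!
On the event `{κ = k} ∩ {B_k ≥ b₀ mᵏ}`, whose probability is at least `γᵏ (1 - γ) / 4` by
independence, the sum `Ω` exceeds `b₀ mᵏ`, so `E[e^{tΩ}] ≥ e^{t b₀ mᵏ} γᵏ (1 - γ) / 4`.
The double-exponential factor beats the geometric one: `e^{x} ≥ xⁿ / n!` with `mⁿ γ > 1`.
-/

open MeasureTheory ProbabilityTheory Filter Finset

section Uniform

variable {S : Type*} [MeasurableSpace S] {μ : Measure S} {X : S → ℝ} {L : ℝ}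

lemma MeasureTheory.pdf.isUniform_Icc_of_map_eq
    (h : Measure.map X μ = (ENNReal.ofReal L)⁻¹ • volume.restrict (Set.Icc 0 L)) :
    pdf.IsUniform X (Set.Icc 0 L) μ := by
  rwa [pdf.IsUniform, ProbabilityTheory.cond, Real.volume_Icc, sub_zero]

namespace MeasureTheory.pdf.IsUniform

lemma ae_mem_Icc (hL : 0 < L) (hu : IsUniform X (Set.Icc 0 L) μ) :
    ∀ᵐ x ∂μ, X x ∈ Set.Icc 0 L := by
  have hvol : volume (Set.Icc 0 L) = ENNReal.ofReal L := by rw [Real.volume_Icc, sub_zero]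
  refine ae_of_ae_map (hu.aemeasurable ?_ ?_) ?_
  · simpa [hvol] using hL
  · simp [hvol]
  · rw [hu]
    exact ae_cond_mem measurableSet_Icc

lemma measure_setOf_le_of_Icc (hL : 0 < L) {a : ℝ} (ha : 0 ≤ a)
    (hu : IsUniform X (Set.Icc 0 L) μ) :
    μ {x | a ≤ X x} = ENNReal.ofReal ((L - a) / L) := by
  have hvol : volume (Set.Icc 0 L) = ENNReal.ofReal L := by rw [Real.volume_Icc, sub_zero]
  have hinter : Set.Icc 0 L ∩ Set.Ici a = Set.Icc a L := by
    ext x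
    simp only [Set.mem_inter_iff, Set.mem_Icc, Set.mem_Ici]
    grind
  rw [show {x | a ≤ X x} = X ⁻¹' Set.Ici a from rfl,
    hu.measure_preimage (by simpa [hvol] using hL) (by simp [hvol]) measurableSet_Ici,
    hinter, Real.volume_Icc, hvol, ENNReal.ofReal_div_of_pos hL]

lemma ofReal_quarter_le_measure_setOf_le {a : ℝ} (ha : 3 / 2 ≤ a)
    (hu : IsUniform X (Set.Icc 0 (2 * a - 1)) μ) :
    ENNReal.ofReal (1 / 4) ≤ μ {x | a ≤ X x} := by
  rw [hu.measure_setOf_le_of_Icc (by linarith) (by linarith)]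
  refine ENNReal.ofReal_le_ofReal ?_
  rw [le_div_iff₀ (by linarith)]
  linarith

end MeasureTheory.pdf.IsUniform

end Uniform

lemma tendsto_exp_mul_pow_mul_pow_atTop {c m γ : ℝ} (hc : 0 < c) (hm : 1 < m) (hγ : 0 < γ) :
    Tendsto (fun k : ℕ => Real.exp (c * m ^ k) * γ ^ k) atTop atTop := by
  obtain ⟨n, hn⟩ := pow_unbounded_of_one_lt γ⁻¹ hm
  have hρ : 1 < m ^ n * γ := by rwa [inv_lt_iff_one_lt_mul₀ hγ] at hn
  refine tendsto_atTop_mono (fun k => ?_)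
    ((tendsto_pow_atTop_atTop_of_one_lt hρ).const_mul_atTop
      (by positivity : 0 < c ^ n / n.factorial))
  calc c ^ n / n.factorial * (m ^ n * γ) ^ k = (c * m ^ k) ^ n / n.factorial * γ ^ k := by
        rw [mul_pow, mul_pow, ← pow_mul, ← pow_mul, mul_comm n k]
        ring
    _ ≤ Real.exp (c * m ^ k) * γ ^ k := by
        gcongr
        exact Real.pow_div_factorial_le_exp _ (by positivity) n

section RandomSum

variable {S : Type*} {B : ℕ → S → ℝ} {κ : S → ℕ}

def randomSum (B : ℕ → S → ℝ) (κ : S → ℕ) (x : S) : ℝ :=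
  ∑ k ∈ range (κ x + 1), B k x

lemma le_randomSum {x : S} (hB : ∀ j, 0 ≤ B j x) : B (κ x) x ≤ randomSum B κ x :=
  single_le_sum (fun j _ => hB j) (self_mem_range_succ _)

variable [MeasurableSpace S] {μ : Measure S}

lemma ofReal_exp_mul_measure_le_lintegral_exp_randomSum (hB : ∀ j, Measurable (B j))
    (hκ : Measurable κ) (hB0 : ∀ j, ∀ᵐ x ∂μ, 0 ≤ B j x)
    (hind : IndepFun κ (fun x j => B j x) μ) {t : ℝ} (ht : 0 ≤ t) (a : ℝ) (k : ℕ) :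
    ENNReal.ofReal (Real.exp (t * a)) * (μ {x | κ x = k} * μ {x | a ≤ B k x}) ≤
      ∫⁻ x, ENNReal.ofReal (Real.exp (t * randomSum B κ x)) ∂μ := by
  set E := {x | κ x = k} ∩ {x | a ≤ B k x}
  have hEmeas : MeasurableSet E :=
    (hκ (measurableSet_singleton k)).inter (measurableSet_le measurable_const (hB k))
  have hE : μ E = μ {x | κ x = k} * μ {x | a ≤ B k x} :=
    hind.measure_inter_preimage_eq_mul {k} {f | a ≤ f k} (measurableSet_singleton k)
      (measurableSet_le measurable_const (measurable_pi_apply k))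
  have hbound : ∀ᵐ x ∂μ, x ∈ E →
      ENNReal.ofReal (Real.exp (t * a)) ≤ ENNReal.ofReal (Real.exp (t * randomSum B κ x)) := by
    filter_upwards [ae_all_iff.2 hB0] with x hx ⟨hκx, hax⟩
    gcongr
    calc a ≤ B k x := hax
      _ = B (κ x) x := by rw [show κ x = k from hκx]
      _ ≤ randomSum B κ x := le_randomSum hx
  calc ENNReal.ofReal (Real.exp (t * a)) * (μ {x | κ x = k} * μ {x | a ≤ B k x})
      = ∫⁻ _ in E, ENNReal.ofReal (Real.exp (t * a)) ∂μ := by rw [setLIntegral_const, hE]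
    _ ≤ ∫⁻ x in E, ENNReal.ofReal (Real.exp (t * randomSum B κ x)) ∂μ :=
        setLIntegral_mono_ae' hEmeas hbound
    _ ≤ ∫⁻ x, ENNReal.ofReal (Real.exp (t * randomSum B κ x)) ∂μ :=
        setLIntegral_le_lintegral _ _

end RandomSum

theorem stmt2_general
    {S : Type*} [MeasurableSpace S] (μ : Measure S)
    (m b0 γ : ℝ) (hm : 1 < m) (hb0 : 1 ≤ b0) (hγ0 : 0 < γ) (hγ : γ < 1 / m)
    (B : ℕ → S → ℝ) (κ : S → ℕ)
    (hBmeas : ∀ k, Measurable (B k)) (hκmeas : Measurable κ)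
    (hBunif : ∀ k, Measure.map (B k) μ
      = (ENNReal.ofReal (2 * b0 * m ^ k - 1))⁻¹ •
          (volume.restrict (Set.Icc (0:ℝ) (2 * b0 * m ^ k - 1))))
    (hκindep : ProbabilityTheory.IndepFun κ (fun x k => B k x) μ)
    (hκdist : ∀ k : ℕ, μ {x | κ x = k} = ENNReal.ofReal (γ ^ k * (1 - γ))) :
    ∀ t : ℝ, 0 < t →
      ∫⁻ x, ENNReal.ofReal (Real.exp (t * ∑ k ∈ Finset.range (κ x + 1), B k x)) ∂μ = ⊤ := by
  intro t ht
  have hγ1 : γ < 1 := hγ.trans_le (div_le_one_of_le₀ hm.le (by linarith))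
  have hb : ∀ k : ℕ, 1 ≤ b0 * m ^ k := fun k =>
    one_le_mul_of_one_le_of_one_le hb0 (one_le_pow₀ hm.le)
  have hunif : ∀ k, pdf.IsUniform (B k) (Set.Icc 0 (2 * (b0 * m ^ k) - 1)) μ := fun k =>
    pdf.isUniform_Icc_of_map_eq (by rw [← mul_assoc]; exact hBunif k)
  have hB0 : ∀ j, ∀ᵐ x ∂μ, 0 ≤ B j x := fun j =>
    ((hunif j).ae_mem_Icc (by linarith [hb j])).mono fun _ hx => hx.1
  have hlower : ∀ᶠ k in atTop,
      ENNReal.ofReal (Real.exp (t * (b0 * m ^ k)) * (γ ^ k * (1 - γ)) * (1 / 4)) ≤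
        ∫⁻ x, ENNReal.ofReal (Real.exp (t * randomSum B κ x)) ∂μ := by
    filter_upwards [(tendsto_pow_atTop_atTop_of_one_lt hm).eventually_ge_atTop 2] with k hk
    have hbk : 2 ≤ b0 * m ^ k := hk.trans (le_mul_of_one_le_left (by positivity) hb0)
    calc _ = ENNReal.ofReal (Real.exp (t * (b0 * m ^ k))) *
          (μ {x | κ x = k} * ENNReal.ofReal (1 / 4)) := by
          rw [hκdist, mul_assoc, ENNReal.ofReal_mul (by positivity),
            ENNReal.ofReal_mul (mul_nonneg (by positivity) (sub_nonneg.2 hγ1.le))]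
      _ ≤ ENNReal.ofReal (Real.exp (t * (b0 * m ^ k))) *
          (μ {x | κ x = k} * μ {x | b0 * m ^ k ≤ B k x}) := by
          gcongr
          exact (hunif k).ofReal_quarter_le_measure_setOf_le (by linarith)
      _ ≤ _ := ofReal_exp_mul_measure_le_lintegral_exp_randomSum hBmeas hκmeas hB0 hκindep
          ht.le _ k
  have hgrowth : Tendsto
      (fun k : ℕ => Real.exp (t * (b0 * m ^ k)) * (γ ^ k * (1 - γ)) * (1 / 4)) atTop atTop := by
    have hdouble := tendsto_exp_mul_pow_mul_pow_atTop (c := t * b0) (by positivity) hm hγ0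
    simpa only [mul_assoc] using
      (hdouble.atTop_mul_const (sub_pos.2 hγ1)).atTop_mul_const (by norm_num : (0:ℝ) < 1 / 4)
  exact top_le_iff.1 (le_of_tendsto (ENNReal.tendsto_ofReal_atTop.comp hgrowth) hlower)

theorem stmt2
    {S : Type*} [MeasurableSpace S] (μ : Measure S) [IsProbabilityMeasure μ]
    (m b0 γ : ℝ) (hm : 1 < m) (hb0 : 1 ≤ b0) (hγ0 : 0 < γ) (hγ : γ < 1 / m)
    (B : ℕ → S → ℝ) (κ : S → ℕ)
    (hBmeas : ∀ k, Measurable (B k)) (hκmeas : Measurable κ)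
    (hBunif : ∀ k, Measure.map (B k) μ
      = (ENNReal.ofReal (2 * b0 * m ^ k - 1))⁻¹ •
          (volume.restrict (Set.Icc (0:ℝ) (2 * b0 * m ^ k - 1))))
    (hBindep : ProbabilityTheory.iIndepFun B μ)
    (hκindep : ProbabilityTheory.IndepFun κ (fun x k => B k x) μ)
    (hκdist : ∀ k : ℕ, μ {x | κ x = k} = ENNReal.ofReal (γ ^ k * (1 - γ))) :
    ∀ t : ℝ, 0 < t →
      ∫⁻ x, ENNReal.ofReal (Real.exp (t * ∑ k ∈ Finset.range (κ x + 1), B k x)) ∂μ = ⊤ :=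
  stmt2_general μ m b0 γ hm hb0 hγ0 hγ B κ hBmeas hκmeas hBunif hκindep hκdist
end

section
/- The second moment of Ω satisfies E[Ω²] = ∑_{k=0}^K γ^k (1+v_k²)/q_k² + 2 ∑_{k=1}^K (γ^k/q_k) ∑_{i=0}^{k-1} (1/q_i). -/
/-!
Expanding the square, `(∑_{k ≤ κ} B_k)² = ∑_{k ≤ K} 1{k ≤ κ} (B_k² + 2 B_k ∑_{i < k} B_i)`.
Since `κ` is independent of the family `B`, the expectation of each summand factors as
`P(κ ≥ k) · E[B_k² + 2 B_k ∑_{i<k} B_i]`; the tail `P(κ ≥ k)` of the truncated geometric law is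
`γ^k`, and pairwise independence gives `E[B_k B_i] = 1/(q_k q_i)`. Everything is computed with
lower Lebesgue integrals in `ℝ≥0∞`, so no integrability has to be checked.
-/

open MeasureTheory ProbabilityTheory Finset
open scoped ENNReal

theorem sq_sum_range_eq {R : Type*} [CommSemiring R] (f : ℕ → R) (n : ℕ) :
    (∑ k ∈ range n, f k) ^ 2 = ∑ k ∈ range n, (f k ^ 2 + 2 * f k * ∑ i ∈ range k, f i) := by
  induction n with
  | zero => simp
  | succ n ih => rw [sum_range_succ, add_sq, ih, sum_range_succ]; ring

theorem sum_range_ite_le {M : Type*} [AddCommMonoid M] (f : ℕ → M) {j n : ℕ} (hj : j < n) :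
    ∑ k ∈ range n, (if k ≤ j then f k else 0) = ∑ k ∈ range (j + 1), f k := by
  rw [← sum_filter]
  congr 1
  ext k
  simp only [mem_filter, mem_range]
  omega

section

variable {S : Type*} [MeasurableSpace S] {μ : Measure S}

theorem lintegral_indicator_preimage_of_indepFun {ι : Type*} [MeasurableSpace ι] {κ : S → ι}
    {Z : S → ℝ≥0∞} (hκ : Measurable κ) (hZ : AEMeasurable Z μ) (hind : IndepFun κ Z μ)
    {t : Set ι} (ht : MeasurableSet t) :
    ∫⁻ x, (κ ⁻¹' t).indicator Z x ∂μ = μ (κ ⁻¹' t) * ∫⁻ x, Z x ∂μ := by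
  have hφ : Measurable (t.indicator (1 : ι → ℝ≥0∞)) := measurable_one.indicator ht
  have hprod : ∀ x, (κ ⁻¹' t).indicator Z x = t.indicator 1 (κ x) * Z x := fun x => by
    by_cases hx : κ x ∈ t <;> simp [hx]
  rw [lintegral_congr hprod, lintegral_mul_eq_lintegral_mul_lintegral_of_indepFun''
    (f := fun x => t.indicator 1 (κ x)) (hφ.comp hκ).aemeasurable hZ
    (hind.comp hφ measurable_id)]
  congr 1
  exact lintegral_indicator_one (hκ ht)

theorem lintegral_mul_sum_range_of_iIndepFun {X : ℕ → S → ℝ≥0∞} (hX : ∀ k, Measurable (X k))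
    (hind : iIndepFun X μ) (k : ℕ) :
    ∫⁻ x, X k x * ∑ i ∈ range k, X i x ∂μ
      = (∫⁻ x, X k x ∂μ) * ∑ i ∈ range k, ∫⁻ x, X i x ∂μ := by
  simp_rw [mul_sum]
  rw [lintegral_finsetSum (f := fun i x => X k x * X i x) _ fun i _ => (hX k).mul (hX i)]
  refine sum_congr rfl fun i hi => ?_
  exact lintegral_mul_eq_lintegral_mul_lintegral_of_indepFun'' (hX k).aemeasurable
    (hX i).aemeasurable (hind.indepFun (by simp only [mem_range] at hi; omega))

theorem lintegral_sq_add_two_mul_sum_range_of_iIndepFun {X : ℕ → S → ℝ≥0∞}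
    (hX : ∀ k, Measurable (X k)) (hind : iIndepFun X μ) (k : ℕ) :
    ∫⁻ x, (X k x ^ 2 + 2 * X k x * ∑ i ∈ range k, X i x) ∂μ
      = ∫⁻ x, X k x ^ 2 ∂μ + 2 * (∫⁻ x, X k x ∂μ) * ∑ i ∈ range k, ∫⁻ x, X i x ∂μ := by
  simp_rw [mul_assoc]
  rw [lintegral_add_left ((hX k).pow_const 2),
    lintegral_const_mul (f := fun x => X k x * ∑ i ∈ range k, X i x) _
      ((hX k).mul (Finset.measurable_sum _ fun i _ => hX i)),
    lintegral_mul_sum_range_of_iIndepFun hX hind]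

theorem measure_setOf_le_eq_ofReal_pow {κ : S → ℕ} (hκ : Measurable κ) {K : ℕ} {γ : ℝ}
    (hγ0 : 0 ≤ γ) (hγ1 : γ ≤ 1) (hκle : ∀ x, κ x ≤ K)
    (hκdist : ∀ k, k < K → μ {x | κ x = k} = ENNReal.ofReal (γ ^ k - γ ^ (k + 1)))
    (hκK : μ {x | κ x = K} = ENNReal.ofReal (γ ^ K)) {k : ℕ} (hk : k ≤ K) :
    μ {x | k ≤ κ x} = ENNReal.ofReal (γ ^ k) := by
  induction hk using Nat.decreasingInduction with
  | self =>
    rw [← hκK]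
    congr 1
    ext x
    simp only [Set.mem_ofPred_eq]
    exact ⟨fun h => le_antisymm (hκle x) h, fun h => h ▸ le_rfl⟩
  | of_succ k hk ih =>
    have hsplit : {x | k ≤ κ x} = {x | κ x = k} ∪ {x | k + 1 ≤ κ x} := by
      ext x
      simp only [Set.mem_ofPred_eq, Set.mem_union]
      omega
    have hdisj : Disjoint {x | κ x = k} {x | k + 1 ≤ κ x} :=
      Set.disjoint_left.mpr fun x hx hx' => by simp_all
    rw [hsplit, measure_union hdisj (hκ measurableSet_Ici), hκdist k hk, ih,
      ← ENNReal.ofReal_add (sub_nonneg.mpr (pow_le_pow_of_le_one hγ0 hγ1 (Nat.le_add_right k 1)))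
        (pow_nonneg hγ0 _)]
    congr 1
    ring

theorem lintegral_sq_sum_range_succ_of_indepFun {X : ℕ → S → ℝ≥0∞} {κ : S → ℕ}
    (hX : ∀ k, Measurable (X k)) (hXind : iIndepFun X μ) (hκ : Measurable κ)
    (hκind : IndepFun κ (fun x k => X k x) μ) {K : ℕ} (hκle : ∀ x, κ x ≤ K) :
    ∫⁻ x, (∑ k ∈ range (κ x + 1), X k x) ^ 2 ∂μ
      = ∑ k ∈ range (K + 1), μ {x | k ≤ κ x}
          * (∫⁻ x, X k x ^ 2 ∂μ + 2 * (∫⁻ x, X k x ∂μ) * ∑ i ∈ range k, ∫⁻ x, X i x ∂μ) := by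
  set D : ℕ → S → ℝ≥0∞ := fun k x => X k x ^ 2 + 2 * X k x * ∑ i ∈ range k, X i x
  have hDmeas : ∀ k, Measurable (D k) := fun k => by fun_prop
  have hDind : ∀ k, IndepFun κ (D k) μ := fun k => by
    refine hκind.comp (ψ := fun y : ℕ → ℝ≥0∞ => y k ^ 2 + 2 * y k * ∑ i ∈ range k, y i)
      measurable_id ?_
    fun_prop
  have hpoint : ∀ x, (∑ k ∈ range (κ x + 1), X k x) ^ 2
      = ∑ k ∈ range (K + 1), (κ ⁻¹' Set.Ici k).indicator (D k) x := fun x => by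
    rw [sq_sum_range_eq]
    refine (sum_range_ite_le (fun k => D k x) (Nat.lt_succ_of_le (hκle x))).symm.trans
      (sum_congr rfl fun k _ => ?_)
    by_cases hk : k ≤ κ x <;> simp [hk]
  rw [lintegral_congr hpoint,
    lintegral_finsetSum _ fun k _ => (hDmeas k).indicator (hκ measurableSet_Ici)]
  refine sum_congr rfl fun k _ => ?_
  rw [lintegral_indicator_preimage_of_indepFun hκ (hDmeas k).aemeasurable (hDind k)
    measurableSet_Ici, lintegral_sq_add_two_mul_sum_range_of_iIndepFun hX hXind]
  rfl

end

theorem ofReal_sum_range_add_two_mul_sum_Icc {γ : ℝ} (hγ : 0 ≤ γ) {q : ℕ → ℝ}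
    (hq : ∀ k, 0 < q k) (v : ℕ → ℝ) (K : ℕ) :
    ENNReal.ofReal ((∑ k ∈ range (K + 1), γ ^ k * (1 + v k ^ 2) / q k ^ 2)
        + 2 * ∑ k ∈ Icc 1 K, γ ^ k / q k * ∑ i ∈ range k, 1 / q i)
      = ∑ k ∈ range (K + 1), ENNReal.ofReal (γ ^ k) * (ENNReal.ofReal ((1 + v k ^ 2) / q k ^ 2)
          + 2 * ENNReal.ofReal (1 / q k) * ∑ i ∈ range k, ENNReal.ofReal (1 / q i)) := by
  lift q to ℕ → NNReal using fun k => (hq k).le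
  have hIcc : ∑ k ∈ Icc 1 K, γ ^ k / q k * ∑ i ∈ range k, 1 / (q i : ℝ)
      = ∑ k ∈ range (K + 1), γ ^ k / q k * ∑ i ∈ range k, 1 / (q i : ℝ) :=
    sum_subset (fun k hk => by simp only [mem_Icc, mem_range] at hk ⊢; omega)
      fun k _ hk => by simp_all
  have hsum : (∑ k ∈ range (K + 1), γ ^ k * (1 + v k ^ 2) / q k ^ 2)
        + 2 * ∑ k ∈ range (K + 1), γ ^ k / q k * ∑ i ∈ range k, 1 / (q i : ℝ)
      = ∑ k ∈ range (K + 1),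
          γ ^ k * ((1 + v k ^ 2) / q k ^ 2 + 2 * (1 / q k) * ∑ i ∈ range k, 1 / (q i : ℝ)) := by
    rw [mul_sum, ← sum_add_distrib]
    exact sum_congr rfl fun k _ => by ring
  rw [hIcc, hsum, ENNReal.ofReal_sum_of_nonneg fun k _ => by positivity]
  refine sum_congr rfl fun k _ => ?_
  rw [ENNReal.ofReal_mul (by positivity), ENNReal.ofReal_add (by positivity) (by positivity),
    ENNReal.ofReal_mul (by positivity), ENNReal.ofReal_mul zero_le_two, ENNReal.ofReal_ofNat,
    ENNReal.ofReal_sum_of_nonneg fun i _ => by positivity]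

theorem stmt4_general
    {S : Type*} [MeasurableSpace S] (μ : Measure S)
    (K : ℕ) (γ : ℝ) (hγ0 : 0 ≤ γ) (hγ1 : γ < 1)
    (B : ℕ → S → ℝ) (κ : S → ℕ) (q v : ℕ → ℝ) (hq : ∀ k, 0 < q k)
    (hBmeas : ∀ k, Measurable (B k)) (hκmeas : Measurable κ)
    (hBpos : ∀ k x, 0 ≤ B k x)
    (hBmean : ∀ k, k ≤ K → ∫⁻ x, ENNReal.ofReal (B k x) ∂μ = ENNReal.ofReal (1 / q k))
    (hB2 : ∀ k, k ≤ K →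
      ∫⁻ x, ENNReal.ofReal ((B k x) ^ 2) ∂μ = ENNReal.ofReal ((1 + (v k) ^ 2) / (q k) ^ 2))
    (hκle : ∀ x, κ x ≤ K)
    (hκdist : ∀ k, k < K → μ {x | κ x = k} = ENNReal.ofReal (γ ^ k - γ ^ (k + 1)))
    (hκK : μ {x | κ x = K} = ENNReal.ofReal (γ ^ K))
    (hBindep : ProbabilityTheory.iIndepFun B μ)
    (hκindep : ProbabilityTheory.IndepFun κ (fun x k => B k x) μ) :
    ∫⁻ x, ENNReal.ofReal ((∑ k ∈ Finset.range (κ x + 1), B k x) ^ 2) ∂μ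
      = ENNReal.ofReal
          ((∑ k ∈ Finset.range (K + 1), γ ^ k * (1 + (v k) ^ 2) / (q k) ^ 2)
            + 2 * ∑ k ∈ Finset.Icc 1 K, (γ ^ k / q k) * ∑ i ∈ Finset.range k, 1 / q i) := by
  set X : ℕ → S → ℝ≥0∞ := fun k x => ENNReal.ofReal (B k x)
  have hXmeas : ∀ k, Measurable (X k) := fun k => (hBmeas k).ennreal_ofReal
  have hXind : iIndepFun X μ :=
    hBindep.comp (fun _ => ENNReal.ofReal) fun _ => ENNReal.measurable_ofReal
  have hκXind : IndepFun κ (fun x k => X k x) μ :=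
    hκindep.comp (ψ := fun (y : ℕ → ℝ) k => ENNReal.ofReal (y k)) measurable_id (by fun_prop)
  have hsq : ∀ x, ENNReal.ofReal ((∑ k ∈ range (κ x + 1), B k x) ^ 2)
      = (∑ k ∈ range (κ x + 1), X k x) ^ 2 := fun x => by
    rw [ENNReal.ofReal_pow (sum_nonneg fun k _ => hBpos k x),
      ENNReal.ofReal_sum_of_nonneg fun k _ => hBpos k x]
  rw [lintegral_congr hsq, lintegral_sq_sum_range_succ_of_indepFun hXmeas hXind hκmeas hκXind hκle,
    ofReal_sum_range_add_two_mul_sum_Icc hγ0 hq]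
  refine sum_congr rfl fun k hk => ?_
  have hk : k ≤ K := Nat.le_of_lt_succ (mem_range.mp hk)
  have hX2 : ∫⁻ x, X k x ^ 2 ∂μ = ENNReal.ofReal ((1 + v k ^ 2) / q k ^ 2) := by
    rw [← hB2 k hk]
    exact lintegral_congr fun x => (ENNReal.ofReal_pow (hBpos k x) 2).symm
  rw [measure_setOf_le_eq_ofReal_pow hκmeas hγ0 hγ1.le hκle hκdist hκK hk, hX2, hBmean k hk,
    sum_congr rfl fun i hi => hBmean i (by simp only [mem_range] at hi; omega)]

theorem stmt4
    {S : Type*} [MeasurableSpace S] (μ : Measure S) [IsProbabilityMeasure μ]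
    (K : ℕ) (γ : ℝ) (hγ0 : 0 ≤ γ) (hγ1 : γ < 1)
    (B : ℕ → S → ℝ) (κ : S → ℕ) (q v : ℕ → ℝ) (hq : ∀ k, 0 < q k)
    (hBmeas : ∀ k, Measurable (B k)) (hκmeas : Measurable κ)
    (hBpos : ∀ k x, 0 ≤ B k x)
    (hBmean : ∀ k, k ≤ K → ∫⁻ x, ENNReal.ofReal (B k x) ∂μ = ENNReal.ofReal (1 / q k))
    (hB2 : ∀ k, k ≤ K →
      ∫⁻ x, ENNReal.ofReal ((B k x) ^ 2) ∂μ = ENNReal.ofReal ((1 + (v k) ^ 2) / (q k) ^ 2))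
    (hκle : ∀ x, κ x ≤ K)
    (hκdist : ∀ k, k < K → μ {x | κ x = k} = ENNReal.ofReal (γ ^ k - γ ^ (k + 1)))
    (hκK : μ {x | κ x = K} = ENNReal.ofReal (γ ^ K))
    (hBindep : ProbabilityTheory.iIndepFun B μ)
    (hκindep : ProbabilityTheory.IndepFun κ (fun x k => B k x) μ) :
    ∫⁻ x, ENNReal.ofReal ((∑ k ∈ Finset.range (κ x + 1), B k x) ^ 2) ∂μ
      = ENNReal.ofReal
          ((∑ k ∈ Finset.range (K + 1), γ ^ k * (1 + (v k) ^ 2) / (q k) ^ 2)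
            + 2 * ∑ k ∈ Finset.Icc 1 K, (γ ^ k / q k) * ∑ i ∈ Finset.range k, 1 / q i) :=
  stmt4_general μ K γ hγ0 hγ1 B κ q v hq hBmeas hκmeas hBpos hBmean hB2 hκle hκdist hκK hBindep
    hκindep
end

section
/- For m > 1, b_0 > 0, and 0 < γ < 1/m, the difference P(K₀) - P(K₀+1), where P(K) = (∑_{k=0}^K γ^k)/(∑_{k=0}^K (b_0 m^k - 1/2) γ^k), equals b_0 γ^{K₀+1} ∑_{k=0}^{K₀} γ^k (m^{K₀+1} - m^k) divided by the product {∑_{k=0}^{K₀} (b_0 m^k - 1/2) γ^k}·{∑_{k=0}^{K₀+1} (b_0 m^k - 1/2) γ^k}, and in particular P(K₀+1) < P(K₀). -/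
/-!
`P K` is the reciprocal of the `γ ^ k`-weighted mean of `c k = b₀ m ^ k - 1 / 2` over `k ≤ K`.
Cross-multiplying, the numerator of `P K - P (K + 1)` is `γ ^ (K + 1) ∑ γ ^ k (c (K + 1) - c k)`,
which is positive because `c` is strictly increasing.
-/

open Finset

theorem sum_div_sum_mul_sub_succ (w c : ℕ → ℝ) (n : ℕ)
    (hn : ∑ k ∈ range n, c k * w k ≠ 0) (hn₁ : ∑ k ∈ range (n + 1), c k * w k ≠ 0) :
    (∑ k ∈ range n, w k) / (∑ k ∈ range n, c k * w k)
        - (∑ k ∈ range (n + 1), w k) / (∑ k ∈ range (n + 1), c k * w k)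
      = (w n * ∑ k ∈ range n, w k * (c n - c k))
        / ((∑ k ∈ range n, c k * w k) * ∑ k ∈ range (n + 1), c k * w k) := by
  have hsum : ∑ k ∈ range n, w k * (c n - c k)
      = c n * ∑ k ∈ range n, w k - ∑ k ∈ range n, c k * w k := by
    rw [mul_sum, ← sum_sub_distrib]
    exact sum_congr rfl fun k _ => by ring
  rw [div_sub_div _ _ hn hn₁, hsum, sum_range_succ, sum_range_succ]
  ring

theorem sum_range_succ_mul_pos {w c : ℕ → ℝ} (hw : ∀ k, 0 < w k) (hc : ∀ k, 0 < c k) (n : ℕ) :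
    0 < ∑ k ∈ range (n + 1), c k * w k :=
  sum_pos (fun k _ => mul_pos (hc k) (hw k)) nonempty_range_add_one

theorem sum_range_succ_mul_sub_pos {w c : ℕ → ℝ} (hw : ∀ k, 0 < w k) (hc : StrictMono c)
    (n : ℕ) : 0 < ∑ k ∈ range (n + 1), w k * (c (n + 1) - c k) :=
  sum_pos (fun k hk => mul_pos (hw k) (sub_pos.2 (hc (mem_range.1 hk))))
    nonempty_range_add_one

theorem stmt6_general
    (m b0 γ : ℝ) (hm : 1 < m) (hb0 : 1 ≤ b0) (hγ0 : 0 < γ)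
    (P : ℕ → ℝ)
    (hP : ∀ K : ℕ, P K = (∑ k ∈ Finset.range (K + 1), γ ^ k)
        / (∑ k ∈ Finset.range (K + 1), (b0 * m ^ k - 1 / 2) * γ ^ k))
    (K₀ : ℕ) :
    P K₀ - P (K₀ + 1)
      = (b0 * γ ^ (K₀ + 1) * ∑ k ∈ Finset.range (K₀ + 1), γ ^ k * (m ^ (K₀ + 1) - m ^ k))
        / ((∑ k ∈ Finset.range (K₀ + 1), (b0 * m ^ k - 1 / 2) * γ ^ k)
            * (∑ k ∈ Finset.range (K₀ + 2), (b0 * m ^ k - 1 / 2) * γ ^ k))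
    ∧ P (K₀ + 1) < P K₀ := by
  have hw : ∀ k, 0 < γ ^ k := fun k => pow_pos hγ0 k
  have hc : ∀ k, 0 < b0 * m ^ k - 1 / 2 := fun k => by
    nlinarith [one_le_pow₀ (n := k) hm.le]
  have hden := sum_range_succ_mul_pos hw hc
  have hnum : γ ^ (K₀ + 1) * ∑ k ∈ range (K₀ + 1),
        γ ^ k * ((b0 * m ^ (K₀ + 1) - 1 / 2) - (b0 * m ^ k - 1 / 2))
      = b0 * γ ^ (K₀ + 1) * ∑ k ∈ range (K₀ + 1), γ ^ k * (m ^ (K₀ + 1) - m ^ k) := by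
    simp only [mul_sum]
    exact sum_congr rfl fun k _ => by ring
  have hdiff : P K₀ - P (K₀ + 1)
      = (b0 * γ ^ (K₀ + 1) * ∑ k ∈ range (K₀ + 1), γ ^ k * (m ^ (K₀ + 1) - m ^ k))
        / ((∑ k ∈ range (K₀ + 1), (b0 * m ^ k - 1 / 2) * γ ^ k)
            * (∑ k ∈ range (K₀ + 2), (b0 * m ^ k - 1 / 2) * γ ^ k)) := by
    rw [hP, hP, ← hnum]
    exact sum_div_sum_mul_sub_succ (γ ^ ·) (b0 * m ^ · - 1 / 2) (K₀ + 1)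
      (hden K₀).ne' (hden (K₀ + 1)).ne'
  refine ⟨hdiff, sub_pos.1 ?_⟩
  rw [hdiff, ← hnum]
  have hmono : StrictMono (b0 * m ^ · - 1 / 2 : ℕ → ℝ) := fun i j hij => by
    have := pow_lt_pow_right₀ hm hij
    dsimp only
    nlinarith
  exact div_pos (mul_pos (hw _) (sum_range_succ_mul_sub_pos hw hmono K₀))
    (mul_pos (hden K₀) (hden (K₀ + 1)))

theorem stmt6
    (m b0 γ : ℝ) (hm : 1 < m) (hb0 : 1 ≤ b0) (hγ0 : 0 < γ) (hγ : γ < 1 / m)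
    (P : ℕ → ℝ)
    (hP : ∀ K : ℕ, P K = (∑ k ∈ Finset.range (K + 1), γ ^ k)
        / (∑ k ∈ Finset.range (K + 1), (b0 * m ^ k - 1 / 2) * γ ^ k))
    (K₀ : ℕ) :
    P K₀ - P (K₀ + 1)
      = (b0 * γ ^ (K₀ + 1) * ∑ k ∈ Finset.range (K₀ + 1), γ ^ k * (m ^ (K₀ + 1) - m ^ k))
        / ((∑ k ∈ Finset.range (K₀ + 1), (b0 * m ^ k - 1 / 2) * γ ^ k)
            * (∑ k ∈ Finset.range (K₀ + 2), (b0 * m ^ k - 1 / 2) * γ ^ k))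
    ∧ P (K₀ + 1) < P K₀ :=
  stmt6_general m b0 γ hm hb0 hγ0 P hP K₀
end

section
/- Suppose h : ℝ₊ → ℝ₊ satisfies h(yy') = h(y)h(y') whenever defined, h(m) = m^{α-z}, and h(λ) = λ^{\tilde{α}-z} for some λ with (log λ)/(log m) irrational, and suppose m^{α-z} ≤ h(y) ≤ 1 for all y ∈ (1, m) (with α ≤ z). Then \tilde{α} = α. -/
/-!
Write `h m = m ^ a` and `h λ = λ ^ b`. Multiplicativity gives
`log h(m^i λ^j) = a · log(m^i λ^j) + (b - a) · j · log λ`. As `log λ / log m` is irrational,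
for every `j ≠ 0` some `m^i λ^j` lies in `(1, m)`, where `m^a ≤ h ≤ 1` confines the error term
`(b - a) · j · log λ` to `[-|a| log m, |a| log m]`. Bounded integer multiples of a real vanish,
so `b = a`.
-/

open Real Set

theorem apply_eq_zpow_of_map_add {M : Type*} [GroupWithZero M] {f : ℤ → M}
    (hf : ∀ p q, f (p + q) = f p * f q) (h1 : f 1 ≠ 0) (n : ℤ) : f n = f 1 ^ n := by
  have h0 : f 0 = 1 := by
    have := hf 1 0
    rw [add_zero] at this
    exact (mul_eq_left₀ h1).mp this.symm
  induction n using Int.induction_on with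
  | zero => simpa using h0
  | succ k ih => rw [hf, ih, zpow_add_one₀ h1]
  | pred k ih =>
    rw [← mul_left_inj' h1, ← hf, sub_add_cancel, ih, ← zpow_add_one₀ h1, sub_add_cancel]

theorem map_zpow_of_map_zpow_mul {K M : Type*} [GroupWithZero K] [GroupWithZero M] {x : K}
    (hx : x ≠ 0) {h : K → M} (hmul : ∀ p q : ℤ, h (x ^ p * x ^ q) = h (x ^ p) * h (x ^ q))
    (hhx : h x ≠ 0) (n : ℤ) : h (x ^ n) = h x ^ n := by
  simpa using apply_eq_zpow_of_map_add (f := fun n ↦ h (x ^ n))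
    (fun p q ↦ by simpa only [zpow_add₀ hx] using hmul p q) (by simpa using hhx) n

theorem map_zpow_mul_zpow {K M : Type*} [CommGroupWithZero K] [GroupWithZero M] {m lam : K}
    (hm : m ≠ 0) (hlam : lam ≠ 0) {h : K → M}
    (hmul : ∀ y ∈ {y : K | ∃ i j : ℤ, y = m ^ i * lam ^ j},
      ∀ y' ∈ {y : K | ∃ i j : ℤ, y = m ^ i * lam ^ j}, h (y * y') = h y * h y')
    (hhm : h m ≠ 0) (hhlam : h lam ≠ 0) (i j : ℤ) :
    h (m ^ i * lam ^ j) = h m ^ i * h lam ^ j := by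
  rw [hmul _ ⟨i, 0, by simp⟩ _ ⟨0, j, by simp⟩,
    map_zpow_of_map_zpow_mul hm (fun p q ↦ hmul _ ⟨p, 0, by simp⟩ _ ⟨q, 0, by simp⟩) hhm,
    map_zpow_of_map_zpow_mul hlam (fun p q ↦ hmul _ ⟨0, p, by simp⟩ _ ⟨0, q, by simp⟩) hhlam]

theorem exists_zpow_mul_mem_Ioo {K : Type*} [Field K] [LinearOrder K] [IsStrictOrderedRing K]
    [Archimedean K] {m x : K} (hm : 1 < m) (hx : 0 < x) (hx_ne : ∀ k : ℤ, m ^ k ≠ x) :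
    ∃ i : ℤ, m ^ i * x ∈ Ioo 1 m := by
  obtain ⟨k, hk_le, hk_lt⟩ := exists_mem_Ico_zpow hx hm
  have hmk : 0 < m ^ k := zpow_pos (zero_lt_one.trans hm) k
  refine ⟨-k, ?_, ?_⟩
  · rw [zpow_neg, inv_mul_eq_div, one_lt_div hmk]
    exact hk_le.lt_of_ne (hx_ne k)
  · rwa [zpow_neg, inv_mul_eq_div, div_lt_iff₀ hmk, ← zpow_one_add₀ (zero_lt_one.trans hm).ne',
      add_comm]

theorem zpow_ne_zpow_of_irrational {m lam : ℝ}
    (hirr : Irrational (log lam / log m)) {j : ℤ} (hj : j ≠ 0) (k : ℤ) : m ^ k ≠ lam ^ j := by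
  intro hkj
  have hlog : (k : ℝ) * log m = j * log lam := by rw [← log_zpow, hkj, log_zpow]
  apply hirr.ne_rational k j
  have hL : log m ≠ 0 := fun h0 ↦ hirr (by simp [h0])
  field_simp
  linarith

theorem abs_log_sub_mul_log_le {m y w a : ℝ} (hm : 1 < m) (hy : y ∈ Ioo 1 m)
    (hw : w ∈ Icc (m ^ a) 1) : |log w - a * log y| ≤ |a| * log m := by
  have hm0 : 0 < m := zero_lt_one.trans hm
  have hw0 : 0 < w := (rpow_pos_of_pos hm0 a).trans_le hw.1
  have hlow : a * log m ≤ log w := by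
    rw [← log_rpow hm0]; exact log_le_log (rpow_pos_of_pos hm0 a) hw.1
  have hup : log w ≤ 0 := log_nonpos hw0.le hw.2
  have hy0 : 0 < log y := log_pos hy.1
  have hym : log y < log m := log_lt_log (zero_lt_one.trans hy.1) hy.2
  have ha : a ≤ 0 := nonpos_of_mul_nonpos_left (hlow.trans hup) (hy0.trans hym)
  rw [abs_of_nonpos ha, abs_le]
  constructor <;> nlinarith

theorem eq_zero_of_forall_abs_mul_intCast_le {K : Type*} [Field K] [LinearOrder K]
    [IsStrictOrderedRing K] [Archimedean K] {c C : K} (h : ∀ j : ℤ, j ≠ 0 → |c * j| ≤ C) :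
    c = 0 := by
  by_contra hc
  obtain ⟨n, hn⟩ := exists_nat_gt (C / |c|)
  have hbound := h (n + 1) (by positivity)
  rw [abs_mul, Int.cast_add, Int.cast_natCast, Int.cast_one,
    abs_of_pos (by positivity : (0 : K) < n + 1)] at hbound
  rw [div_lt_iff₀ (abs_pos.mpr hc)] at hn
  nlinarith [abs_nonneg c]

theorem log_zpow_rpow_mul_sub {m lam : ℝ} (hm : 0 < m) (hlam : 0 < lam) (a b : ℝ) (i j : ℤ) :
    log ((m ^ a) ^ i * (lam ^ b) ^ j) - a * log (m ^ i * lam ^ j) = (b - a) * log lam * j := by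
  rw [log_mul (by positivity) (by positivity), log_mul (by positivity) (by positivity),
    log_zpow, log_zpow, log_zpow, log_zpow, log_rpow hm, log_rpow hlam]
  ring

theorem stmt15_general
    (m lam : ℝ) (hm : 1 < m) (hlam : 1 < lam)
    (hirr : Irrational (Real.log lam / Real.log m))
    (z : ℤ) (α α' : ℝ)
    (G : Set ℝ) (hG : G = {y : ℝ | ∃ i j : ℤ, y = m ^ i * lam ^ j})
    (h : ℝ → ℝ)
    (hmul : ∀ y ∈ G, ∀ y' ∈ G, h (y * y') = h y * h y')
    (hhm : h m = m ^ (α - (z : ℝ)))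
    (hhlam : h lam = lam ^ (α' - (z : ℝ)))
    (hbound : ∀ y ∈ Set.Ioo (1 : ℝ) m, m ^ (α - (z : ℝ)) ≤ h y ∧ h y ≤ 1) :
    α' = α := by
  subst hG
  have hm0 : 0 < m := zero_lt_one.trans hm
  have hlam0 : 0 < lam := zero_lt_one.trans hlam
  have hval := map_zpow_mul_zpow hm0.ne' hlam0.ne' hmul (by rw [hhm]; positivity)
    (by rw [hhlam]; positivity)
  have hbdd : ∀ j : ℤ, j ≠ 0 →
      |((α' - z) - (α - z)) * log lam * j| ≤ |α - z| * log m := by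
    intro j hj
    obtain ⟨i, hi⟩ := exists_zpow_mul_mem_Ioo hm (zpow_pos hlam0 j)
      (zpow_ne_zpow_of_irrational hirr hj)
    have hlog := abs_log_sub_mul_log_le hm hi (hbound _ hi)
    rwa [hval, hhm, hhlam, log_zpow_rpow_mul_sub hm0 hlam0] at hlog
  have hzero := eq_zero_of_forall_abs_mul_intCast_le hbdd
  rw [mul_eq_zero, or_iff_left (log_pos hlam).ne'] at hzero
  linarith

theorem stmt15
    (m lam : ℝ) (hm : 1 < m) (hlam : 1 < lam)
    (hirr : Irrational (Real.log lam / Real.log m))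
    (z : ℤ) (α α' : ℝ) (hαz : α ≤ (z : ℝ))
    (G : Set ℝ) (hG : G = {y : ℝ | ∃ i j : ℤ, y = m ^ i * lam ^ j})
    (h : ℝ → ℝ)
    (hpos : ∀ y ∈ G, 0 < h y)
    (hmul : ∀ y ∈ G, ∀ y' ∈ G, h (y * y') = h y * h y')
    (hhm : h m = m ^ (α - (z : ℝ)))
    (hhlam : h lam = lam ^ (α' - (z : ℝ)))
    (hbound : ∀ y ∈ Set.Ioo (1 : ℝ) m, m ^ (α - (z : ℝ)) ≤ h y ∧ h y ≤ 1) :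
    α' = α :=
  stmt15_general m lam hm hlam hirr z α α' G hG h hmul hhm hhlam hbound
end

section
/- For a renewal process whose i.i.d. inter-arrival distribution has Laplace–Stieltjes transform structure G(s) = γF_0(s)(1 + H(ms)) with F_i(s) = (1 - e^{-(2b_0 m^i - 1)s})/((2b_0 m^i - 1)s), the function G, as an infinite sum of products of completely monotone functions bounded by 1 on ℝ₊, is completely monotone: G > 0 and (-1)^i G^{(i)}(x) > 0 for all i ∈ ℕ and x > 0. -/
/-!
Each `F_i` is the Laplace transform `∫₀¹ e^{-a_i s t} dt` of a uniform law, and its derivatives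
have the closed form `(-1)ⁿ F_i⁽ⁿ⁾(x) = n! / (a_i xⁿ⁺¹) · P(Poisson(a_i x) > n)`. This is positive,
and since `P(Poisson(u) > n) ≤ 1 - e^{-u} ≤ u` it is at most `n! / xⁿ`, uniformly in `i`.
By Leibniz's rule the signed derivatives of a product of `k + 1` such factors are positive and
at most `(n+k choose k) n! / xⁿ`, so after the weights `γ^{k+1}` with `γ < 1/m < 1` the
differentiated series converges locally uniformly on `(0, ∞)`. Hence `G` may be differentiated
term by term, and each signed derivative is a convergent sum of positive terms.
-/

open Finset Real Set Filter
open scoped Nat ContDiff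

lemma ContDiffAt.hasDerivAt_iteratedDeriv {𝕜 F : Type*} [NontriviallyNormedField 𝕜]
    [NormedAddCommGroup F] [NormedSpace 𝕜 F] {f : 𝕜 → F} {x : 𝕜} (hf : ContDiffAt 𝕜 ∞ f x)
    (n : ℕ) : HasDerivAt (iteratedDeriv n f) (iteratedDeriv (n + 1) f x) x := by
  have hd : DifferentiableAt 𝕜 (iteratedDeriv n f) x := by
    rw [iteratedDeriv_eq_equiv_comp]
    exact (ContinuousMultilinearMap.piFieldEquiv 𝕜 (Fin n) F).symm.differentiableAt.comp x
      (hf.differentiableAt_iteratedFDeriv (WithTop.coe_lt_coe.2 (ENat.natCast_lt_top n)))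
  rw [iteratedDeriv_succ]
  exact hd.hasDerivAt

lemma neg_one_pow_mul_iteratedDeriv_mul {f g : ℝ → ℝ} {x : ℝ} {n : ℕ}
    (hf : ContDiffAt ℝ n f x) (hg : ContDiffAt ℝ n g x) :
    (-1) ^ n * iteratedDeriv n (fun y => f y * g y) x =
      ∑ j ∈ range (n + 1), n.choose j * ((-1) ^ j * iteratedDeriv j f x) *
        ((-1) ^ (n - j) * iteratedDeriv (n - j) g x) := by
  rw [iteratedDeriv_fun_mul hf hg, mul_sum]
  refine sum_congr rfl fun j hj => ?_
  rw [← pow_sub_mul_pow (-1 : ℝ) (Nat.le_of_lt_succ (mem_range.1 hj))]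
  ring

lemma neg_one_pow_mul_iteratedDeriv_prod_range_pos_and_le {g : ℕ → ℝ → ℝ} {x r : ℝ} (hr : 0 ≤ r)
    (hg : ∀ i, ContDiffAt ℝ ∞ (g i) x)
    (hpos : ∀ i n, 0 < (-1) ^ n * iteratedDeriv n (g i) x)
    (hle : ∀ i n, (-1) ^ n * iteratedDeriv n (g i) x ≤ n ! * r ^ n) (k n : ℕ) :
    0 < (-1) ^ n * iteratedDeriv n (fun y => ∏ i ∈ range (k + 1), g i y) x ∧
      (-1) ^ n * iteratedDeriv n (fun y => ∏ i ∈ range (k + 1), g i y) x ≤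
        (n + k).choose k * n ! * r ^ n := by
  induction k generalizing n with
  | zero => simpa using ⟨hpos 0 n, hle 0 n⟩
  | succ k ih =>
    have hprod : ContDiffAt ℝ n (fun y => ∏ i ∈ range (k + 1), g i y) x :=
      contDiffAt_prod fun i _ => (hg i).of_le (by exact_mod_cast le_top)
    simp_rw [prod_range_succ _ (k + 1)]
    rw [neg_one_pow_mul_iteratedDeriv_mul hprod ((hg (k + 1)).of_le (by exact_mod_cast le_top))]
    constructor
    · refine sum_pos (fun j hj => ?_) nonempty_range_add_one
      have := Nat.choose_pos (Nat.le_of_lt_succ (mem_range.1 hj))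
      exact mul_pos (mul_pos (by exact_mod_cast this) (ih j).1) (hpos _ _)
    · calc _ ≤ ∑ j ∈ range (n + 1), ((j + k).choose k : ℝ) * (n ! * r ^ n) := by
            refine sum_le_sum fun j hj => ?_
            have hjn := Nat.le_of_lt_succ (mem_range.1 hj)
            calc (n.choose j : ℝ) * ((-1) ^ j * iteratedDeriv j _ x) *
                  ((-1) ^ (n - j) * iteratedDeriv (n - j) (g (k + 1)) x)
                ≤ n.choose j * ((j + k).choose k * j ! * r ^ j) * ((n - j)! * r ^ (n - j)) :=
                  mul_le_mul (mul_le_mul_of_nonneg_left (ih j).2 (by positivity))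
                    (hle _ _) (hpos _ _).le (by positivity)
              _ = (j + k).choose k * ((n.choose j * j ! * (n - j)! : ℕ) * (r ^ j * r ^ (n - j))) := by
                  push_cast
                  ring
              _ = _ := by rw [Nat.choose_mul_factorial_mul_factorial hjn, ← pow_add,
                  Nat.add_sub_cancel' hjn]
        _ = (n + (k + 1)).choose (k + 1) * n ! * r ^ n := by
            rw [← sum_mul, ← Nat.cast_sum, Nat.sum_range_add_choose, mul_assoc]
            ring_nf

lemma norm_eq_neg_one_pow_mul_of_pos {t : ℝ} {n : ℕ} (h : 0 < (-1) ^ n * t) :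
    ‖t‖ = (-1) ^ n * t := by
  rw [Real.norm_eq_abs, ← abs_of_pos h, abs_mul, abs_pow, abs_neg, abs_one, one_pow, one_mul]

lemma iteratedDeriv_tsum_of_bound_Ioi {f : ℕ → ℝ → ℝ}
    (hf : ∀ k y, 0 < y → ContDiffAt ℝ ∞ (f k) y)
    (hbound : ∀ n ε, 0 < ε → ∃ u : ℕ → ℝ, Summable u ∧
      ∀ k y, ε < y → ‖iteratedDeriv n (f k) y‖ ≤ u k)
    (n : ℕ) {x : ℝ} (hx : 0 < x) :
    iteratedDeriv n (fun y => ∑' k, f k y) x = ∑' k, iteratedDeriv n (f k) x := by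
  induction n generalizing x with
  | zero => simp
  | succ n ih =>
    rw [iteratedDeriv_succ, (eventuallyEq_of_mem (Ioi_mem_nhds hx) fun y hy => ih hy).deriv_eq]
    obtain ⟨u, hu, hule⟩ := hbound (n + 1) (x / 2) (half_pos hx)
    obtain ⟨v, hv, hvle⟩ := hbound n (x / 2) (half_pos hx)
    have hxt : x ∈ Ioi (x / 2) := half_lt_self hx
    exact (hasDerivAt_tsum_of_isPreconnected hu isOpen_Ioi isPreconnected_Ioi
      (fun k y hy => (hf k y ((half_pos hx).trans hy)).hasDerivAt_iteratedDeriv n)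
      (fun k y hy => hule k y hy) hxt (hv.of_norm_bounded fun k => hvle k x hxt) hxt).deriv

theorem neg_one_pow_mul_iteratedDeriv_tsum_prod_pos {g : ℕ → ℝ → ℝ} {γ : ℝ}
    (hγ0 : 0 < γ) (hγ1 : γ < 1)
    (hg : ∀ i y, 0 < y → ContDiffAt ℝ ∞ (g i) y)
    (hpos : ∀ i n y, 0 < y → 0 < (-1) ^ n * iteratedDeriv n (g i) y)
    (hle : ∀ i n y, 0 < y → (-1) ^ n * iteratedDeriv n (g i) y ≤ n ! * y⁻¹ ^ n)
    (n : ℕ) {x : ℝ} (hx : 0 < x) :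
    0 < (-1) ^ n * iteratedDeriv n (fun s => ∑' k, ∏ i ∈ range (k + 1), γ * g i s) x := by
  set P : ℕ → ℝ → ℝ := fun k s => γ ^ (k + 1) * ∏ i ∈ range (k + 1), g i s
  have hP : (fun s => ∑' k, ∏ i ∈ range (k + 1), γ * g i s) = fun s => ∑' k, P k s := by
    simp [P, prod_mul_distrib]
  have hPbounds (k n : ℕ) {y : ℝ} (hy : 0 < y) :
      0 < (-1) ^ n * iteratedDeriv n (P k) y ∧
        (-1) ^ n * iteratedDeriv n (P k) y ≤ γ ^ (k + 1) * ((n + k).choose k * n ! * y⁻¹ ^ n) := by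
    obtain ⟨h1, h2⟩ := neg_one_pow_mul_iteratedDeriv_prod_range_pos_and_le (inv_nonneg.2 hy.le)
      (hg · y hy) (hpos · · y hy) (hle · · y hy) k n
    rw [iteratedDeriv_const_mul_field, mul_left_comm]
    exact ⟨mul_pos (by positivity) h1, mul_le_mul_of_nonneg_left h2 (by positivity)⟩
  have hsum (n : ℕ) (ε : ℝ) (hε : 0 < ε) : ∃ u : ℕ → ℝ, Summable u ∧
      ∀ k y, ε < y → ‖iteratedDeriv n (P k) y‖ ≤ u k := by
    refine ⟨fun k => (k + n).choose n * γ ^ k * (γ * n ! * ε⁻¹ ^ n),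
      (summable_choose_mul_geometric_of_norm_lt_one (R := ℝ) n
        (by rwa [Real.norm_eq_abs, abs_of_pos hγ0])).mul_right _,
      fun k y hy => ?_⟩
    have hy0 : 0 < y := hε.trans hy
    obtain ⟨h1, h2⟩ := hPbounds k n hy0
    rw [norm_eq_neg_one_pow_mul_of_pos h1]
    refine h2.trans ?_
    rw [add_comm n k, Nat.choose_symm_add]
    calc γ ^ (k + 1) * ((k + n).choose n * n ! * y⁻¹ ^ n)
        ≤ γ ^ (k + 1) * ((k + n).choose n * n ! * ε⁻¹ ^ n) := by
          gcongr
      _ = _ := by ring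
  have hPsmooth (k : ℕ) (y : ℝ) (hy : 0 < y) : ContDiffAt ℝ ∞ (P k) y :=
    contDiffAt_const.mul (contDiffAt_prod fun i _ => hg i y hy)
  rw [hP, iteratedDeriv_tsum_of_bound_Ioi hPsmooth hsum n hx, ← tsum_mul_left]
  obtain ⟨u, hu, hule⟩ := hsum n _ (half_pos hx)
  refine Summable.tsum_pos ?_ (fun k => (hPbounds k n hx).1.le) 0 (hPbounds 0 n hx).1
  exact (hu.of_norm_bounded fun k => hule k x (half_lt_self hx)).mul_left _

/-- `expTail n u = P(Poisson(u) > n)`. -/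
noncomputable def expTail (n : ℕ) (u : ℝ) : ℝ :=
  1 - exp (-u) * ∑ j ∈ range (n + 1), u ^ j / j !

lemma expTail_succ (n : ℕ) (u : ℝ) :
    expTail (n + 1) u = expTail n u - exp (-u) * (u ^ (n + 1) / (n + 1)!) := by
  rw [expTail, expTail, sum_range_succ]
  ring

lemma hasDerivAt_sum_range_pow_div_factorial (n : ℕ) (u : ℝ) :
    HasDerivAt (fun v => ∑ j ∈ range (n + 1), v ^ j / (j ! : ℝ))
      (∑ j ∈ range n, u ^ j / (j ! : ℝ)) u := by
  induction n with
  | zero => simpa using hasDerivAt_const u (1 : ℝ)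
  | succ n ih =>
    simp_rw [sum_range_succ (n := n + 1)]
    refine (ih.fun_add ((hasDerivAt_pow (n + 1) u).div_const ((n + 1)! : ℝ))).congr_deriv ?_
    rw [sum_range_succ, Nat.factorial_succ]
    push_cast
    field_simp

lemma hasDerivAt_expTail (n : ℕ) (u : ℝ) :
    HasDerivAt (expTail n) (exp (-u) * (u ^ n / n !)) u := by
  have hexp : HasDerivAt (fun v => exp (-v)) (-exp (-u)) u := by
    simpa using (hasDerivAt_neg u).exp
  refine ((hexp.fun_mul (hasDerivAt_sum_range_pow_div_factorial n u)).const_sub 1).congr_deriv ?_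
  rw [sum_range_succ]
  ring

lemma one_le_sum_range_pow_div_factorial (n : ℕ) {u : ℝ} (hu : 0 ≤ u) :
    1 ≤ ∑ j ∈ range (n + 1), u ^ j / j ! := by
  rw [sum_range_succ']
  simpa using sum_nonneg fun j _ => by positivity

lemma expTail_pos (n : ℕ) {u : ℝ} (hu : 0 < u) : 0 < expTail n u := by
  have hsum : ∑ j ∈ range (n + 1), u ^ j / j ! < exp u := by
    calc ∑ j ∈ range (n + 1), u ^ j / j !
        < ∑ j ∈ range (n + 2), u ^ j / j ! := by
          rw [sum_range_succ _ (n + 1)]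
          exact lt_add_of_pos_right _ (by positivity)
      _ ≤ exp u := sum_le_exp_of_nonneg hu.le _
  have := mul_lt_mul_of_pos_left hsum (exp_pos (-u))
  rw [← exp_add, neg_add_cancel, exp_zero] at this
  rw [expTail]
  linarith

lemma expTail_le_self (n : ℕ) {u : ℝ} (hu : 0 ≤ u) : expTail n u ≤ u := by
  have h1 := one_le_sum_range_pow_div_factorial n hu
  have h2 := add_one_le_exp (-u)
  have := mul_le_mul_of_nonneg_left h1 (exp_pos (-u)).le
  rw [expTail]
  linarith

/-- The Laplace–Stieltjes transform of the uniform distribution on `[0, a]` (for `s > 0`). -/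
noncomputable def uniformLST (a s : ℝ) : ℝ := (1 - exp (-a * s)) / (a * s)

lemma contDiffAt_uniformLST {a x : ℝ} (ha : a ≠ 0) (hx : x ≠ 0) {n : WithTop ℕ∞} :
    ContDiffAt ℝ n (uniformLST a) x := by
  unfold uniformLST
  exact ContDiffAt.div (by fun_prop) (by fun_prop) (mul_ne_zero ha hx)

lemma hasDerivAt_factorial_div_mul_expTail {a x : ℝ} (ha : a ≠ 0) (hx : x ≠ 0) (n : ℕ) :
    HasDerivAt (fun y => (-1) ^ n * n ! / (a * y ^ (n + 1)) * expTail n (a * y))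
      ((-1) ^ (n + 1) * (n + 1)! / (a * x ^ (n + 2)) * expTail (n + 1) (a * x)) x := by
  have hpow : HasDerivAt (fun y => (y ^ (n + 1))⁻¹) (-((n + 1 : ℕ) * x ^ n) / (x ^ (n + 1)) ^ 2) x :=
    (hasDerivAt_pow (n + 1) x).inv (pow_ne_zero _ hx)
  have htail : HasDerivAt (fun y => expTail n (a * y)) (exp (-(a * x)) * ((a * x) ^ n / n !) * a) x :=
    (hasDerivAt_expTail n (a * x)).comp x (by simpa using (hasDerivAt_id x).const_mul a)
  have hform : (fun y => (-1) ^ n * n ! / (a * y ^ (n + 1)) * expTail n (a * y)) =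
      fun y => (-1) ^ n * n ! / a * ((y ^ (n + 1))⁻¹ * expTail n (a * y)) := by
    funext y
    field_simp
  rw [hform]
  refine ((hpow.fun_mul htail).const_mul _).congr_deriv ?_
  rw [expTail_succ, Nat.factorial_succ]
  push_cast
  field_simp
  ring

lemma iteratedDeriv_uniformLST {a : ℝ} (ha : a ≠ 0) (n : ℕ) {x : ℝ} (hx : x ≠ 0) :
    iteratedDeriv n (uniformLST a) x = (-1) ^ n * n ! / (a * x ^ (n + 1)) * expTail n (a * x) := by
  induction n generalizing x with
  | zero =>
    simp only [iteratedDeriv_zero, uniformLST, expTail]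
    field_simp
    simp [mul_comm]
  | succ n ih =>
    rw [iteratedDeriv_succ, (eventuallyEq_of_mem (isOpen_ne.mem_nhds hx) fun y hy => ih hy).deriv_eq]
    exact (hasDerivAt_factorial_div_mul_expTail ha hx n).deriv

lemma neg_one_pow_mul_iteratedDeriv_uniformLST {a x : ℝ} (ha : 0 < a) (hx : 0 < x) (n : ℕ) :
    (-1) ^ n * iteratedDeriv n (uniformLST a) x = n ! / (a * x ^ (n + 1)) * expTail n (a * x) := by
  rw [iteratedDeriv_uniformLST ha.ne' n hx.ne', ← mul_assoc, mul_div_assoc, ← mul_assoc,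
    ← pow_add, ← two_mul, pow_mul]
  simp

lemma neg_one_pow_mul_iteratedDeriv_uniformLST_pos {a x : ℝ} (ha : 0 < a) (hx : 0 < x) (n : ℕ) :
    0 < (-1) ^ n * iteratedDeriv n (uniformLST a) x := by
  rw [neg_one_pow_mul_iteratedDeriv_uniformLST ha hx]
  exact mul_pos (by positivity) (expTail_pos n (mul_pos ha hx))

lemma neg_one_pow_mul_iteratedDeriv_uniformLST_le {a x : ℝ} (ha : 0 < a) (hx : 0 < x) (n : ℕ) :
    (-1) ^ n * iteratedDeriv n (uniformLST a) x ≤ n ! * x⁻¹ ^ n := by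
  rw [neg_one_pow_mul_iteratedDeriv_uniformLST ha hx]
  calc n ! / (a * x ^ (n + 1)) * expTail n (a * x) ≤ n ! / (a * x ^ (n + 1)) * (a * x) :=
        mul_le_mul_of_nonneg_left (expTail_le_self n (by positivity)) (by positivity)
    _ = n ! * x⁻¹ ^ n := by
        rw [inv_pow]
        field_simp
        ring

theorem stmt17
    (m b0 γ : ℝ) (hm : 1 < m) (hb0 : 1 ≤ b0) (hγ0 : 0 < γ) (hγ : γ < 1 / m)
    (F : ℕ → ℝ → ℝ)
    (hF : ∀ i s, F i s = (1 - Real.exp (-(2 * b0 * m ^ i - 1) * s)) / ((2 * b0 * m ^ i - 1) * s))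
    (G : ℝ → ℝ)
    (hG : ∀ s, G s = ∑' k : ℕ, ∏ i ∈ Finset.range (k + 1), γ * F i s) :
    (∀ s : ℝ, 0 < s → 0 < G s) ∧
    ∀ n : ℕ, ∀ x : ℝ, 0 < x → 0 < (-1 : ℝ) ^ n * iteratedDeriv n G x := by
  have ha (i : ℕ) : 0 < 2 * b0 * m ^ i - 1 := by nlinarith [one_le_pow₀ (n := i) hm.le]
  have hγ1 : γ < 1 := hγ.trans ((div_lt_one (by linarith)).2 hm)
  have hGeq : G = fun s => ∑' k, ∏ i ∈ range (k + 1), γ * uniformLST (2 * b0 * m ^ i - 1) s := by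
    funext s
    simp only [hG, hF, uniformLST]
  subst hGeq
  have hCM (n : ℕ) (x : ℝ) (hx : 0 < x) := neg_one_pow_mul_iteratedDeriv_tsum_prod_pos hγ0 hγ1
    (fun i y hy => contDiffAt_uniformLST (ha i).ne' hy.ne')
    (fun i n y hy => neg_one_pow_mul_iteratedDeriv_uniformLST_pos (ha i) hy n)
    (fun i n y hy => neg_one_pow_mul_iteratedDeriv_uniformLST_le (ha i) hy n) n hx
  exact ⟨fun s hs => by simpa using hCM 0 s hs, hCM⟩
end

section
/- Let v_Ω² denote Var(Ω)/E[Ω]², where Ω = ∑_{k=0}^κ B_k with q_k = 2/(2b_0 m^k − 1). Then v_Ω² = (∑_{k=0}^K δ_k)/(∑_{k=0}^K (b_0 m^k − 1/2)γ^k)² − 1, where δ_k = (b_0 m^k − 1/2)γ^k·{((m+1)/(m−1) + v_k²)(b_0 m^k − 1/2) − k − (2b_0 − 1)/(m−1)}. -/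
/-!
Since `κ` is independent of the `B_k` and `P(κ ≥ k) = γ^k` for `k ≤ K`, a sum `∑_{k ≤ κ} Y_k` of
functions `Y_k` of `(B_l)_l` has expectation `∑_{k ≤ K} γ^k E[Y_k]`. This gives `E[Ω]` directly,
and `E[Ω²]` after writing `Ω² = ∑_{k ≤ κ} B_k (2 ∑_{l < k} B_l + B_k)`: by independence each term
has expectation `2 E[B_k] ∑_{l < k} E[B_l] + E[B_k²]`, and summing the geometric series
`∑_{l < k} (b_0 m^l - 1/2)` turns this into `δ_k`.
-/

open MeasureTheory Finset

open ProbabilityTheory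

theorem sq_sum_range_eq_sum_mul {R : Type*} [CommSemiring R] (a : ℕ → R) (n : ℕ) :
    (∑ k ∈ range n, a k) ^ 2 = ∑ k ∈ range n, a k * (2 * ∑ l ∈ range k, a l + a k) := by
  induction n with
  | zero => simp
  | succ n ih => rw [sum_range_succ, sum_range_succ, ← ih]; ring

theorem two_mul_mul_sum_add_sq_eq (b0 m v : ℝ) (hm : m ≠ 1) (k : ℕ) :
    2 * ((b0 * m ^ k - 1 / 2) * ∑ l ∈ range k, (b0 * m ^ l - 1 / 2))
        + (1 + v ^ 2) * (b0 * m ^ k - 1 / 2) ^ 2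
      = (b0 * m ^ k - 1 / 2)
          * (((m + 1) / (m - 1) + v ^ 2) * (b0 * m ^ k - 1 / 2) - k - (2 * b0 - 1) / (m - 1)) := by
  have hm1 : m - 1 ≠ 0 := sub_ne_zero.2 hm
  rw [sum_sub_distrib, ← mul_sum, geom_sum_eq hm, sum_const, card_range, nsmul_eq_mul]
  field_simp
  ring

section

variable {S : Type*} [MeasurableSpace S] {μ : Measure S}

namespace ProbabilityTheory

theorem IndepFun.integral_indicator_preimage {ι : Type*} [MeasurableSpace ι] {κ : S → ι}
    {Y : S → ℝ} (hind : IndepFun κ Y μ) (hκ : Measurable κ) {A : Set ι} (hA : MeasurableSet A)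
    (hY : Integrable Y μ) :
    ∫ x, (κ ⁻¹' A).indicator Y x ∂μ = μ.real (κ ⁻¹' A) * ∫ x, Y x ∂μ := by
  have hmeas : Measurable (A.indicator (1 : ι → ℝ)) := measurable_one.indicator hA
  have hfac : (κ ⁻¹' A).indicator Y = (A.indicator 1 ∘ κ) * Y := by
    ext x; by_cases hx : κ x ∈ A <;> simp [hx]
  have hind' : IndepFun (A.indicator 1 ∘ κ) Y μ := hind.comp hmeas measurable_id
  rw [hfac, hind'.integral_mul_eq_mul_integral
    (hmeas.comp hκ).aestronglyMeasurable hY.aestronglyMeasurable, ← integral_indicator_one (hκ hA)]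
  rfl

theorem iIndepFun.integrable_mul_sum_of_notMem {ι : Type*} {B : ι → S → ℝ} (hB : iIndepFun B μ)
    (hint : ∀ i, Integrable (B i) μ) {s : Finset ι} {i : ι} (hi : i ∉ s) :
    Integrable (fun x => B i x * ∑ j ∈ s, B j x) μ := by
  have hind := (hB.indepFun_finsetSum_of_notMem₀ (fun j => (hint j).aemeasurable) hi).symm
  have := hind.integrable_mul (hint i) (integrable_finsetSum' s fun j _ => hint j)
  convert this using 1
  ext x
  simp [Finset.sum_apply]

theorem iIndepFun.integral_mul_sum_of_notMem {ι : Type*} {B : ι → S → ℝ} (hB : iIndepFun B μ)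
    (hint : ∀ i, Integrable (B i) μ) {s : Finset ι} {i : ι} (hi : i ∉ s) :
    ∫ x, B i x * ∑ j ∈ s, B j x ∂μ = (∫ x, B i x ∂μ) * ∑ j ∈ s, ∫ x, B j x ∂μ := by
  have hind := (hB.indepFun_finsetSum_of_notMem₀ (fun j => (hint j).aemeasurable) hi).symm
  have := hind.integral_mul_eq_mul_integral (hint i).aestronglyMeasurable
    (integrable_finsetSum' s fun j _ => hint j).aestronglyMeasurable
  simpa [Finset.sum_apply, integral_finsetSum s fun j _ => hint j] using this

theorem iIndepFun.integrable_mul_two_mul_sum_range_add {B : ℕ → S → ℝ} (hB : iIndepFun B μ)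
    (hint : ∀ k, Integrable (B k) μ) (hint2 : ∀ k, Integrable (fun x => B k x ^ 2) μ) (k : ℕ) :
    Integrable (fun x => B k x * (2 * ∑ l ∈ range k, B l x + B k x)) μ := by
  have hmul := hB.integrable_mul_sum_of_notMem hint (notMem_range_self (n := k))
  have := (hmul.const_mul 2).add (hint2 k)
  refine this.congr (ae_of_all _ fun x => ?_)
  simp only [Pi.add_apply]
  ring

theorem iIndepFun.integral_mul_two_mul_sum_range_add {B : ℕ → S → ℝ} (hB : iIndepFun B μ)
    (hint : ∀ k, Integrable (B k) μ) (hint2 : ∀ k, Integrable (fun x => B k x ^ 2) μ) (k : ℕ) :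
    ∫ x, B k x * (2 * ∑ l ∈ range k, B l x + B k x) ∂μ
      = 2 * ((∫ x, B k x ∂μ) * ∑ l ∈ range k, ∫ x, B l x ∂μ) + ∫ x, B k x ^ 2 ∂μ := by
  have hmul := hB.integrable_mul_sum_of_notMem hint (notMem_range_self (n := k))
  calc ∫ x, B k x * (2 * ∑ l ∈ range k, B l x + B k x) ∂μ
      = ∫ x, 2 * (B k x * ∑ l ∈ range k, B l x) + B k x ^ 2 ∂μ := by congr 1 with x; ring
    _ = _ := by
      rw [integral_add (hmul.const_mul 2) (hint2 k), integral_const_mul,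
        hB.integral_mul_sum_of_notMem hint notMem_range_self]

end ProbabilityTheory

theorem integral_sum_range_succ_eq_sum_measureReal_le_mul {κ : S → ℕ} {Y : ℕ → S → ℝ} {K : ℕ}
    (hκ : Measurable κ) (hκK : ∀ x, κ x ≤ K) (hY : ∀ k, Integrable (Y k) μ)
    (hind : ∀ k, IndepFun κ (Y k) μ) :
    ∫ x, ∑ k ∈ range (κ x + 1), Y k x ∂μ
      = ∑ k ∈ range (K + 1), μ.real {x | k ≤ κ x} * ∫ x, Y k x ∂μ := by
  have hpt : ∀ x, ∑ k ∈ range (κ x + 1), Y k x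
      = ∑ k ∈ range (K + 1), (κ ⁻¹' Set.Ici k).indicator (Y k) x := by
    intro x
    simp only [Set.indicator, Set.mem_preimage, Set.mem_Ici]
    rw [← sum_filter]
    congr 1
    ext k
    simp only [mem_range, mem_filter]
    have := hκK x
    omega
  simp_rw [hpt]
  rw [integral_finsetSum _ fun k _ => (hY k).indicator (hκ measurableSet_Ici)]
  exact sum_congr rfl fun k _ =>
    (hind k).integral_indicator_preimage hκ measurableSet_Ici (hY k)

theorem measureReal_le_eq_pow [IsFiniteMeasure μ] {κ : S → ℕ} {K : ℕ} {γ : ℝ}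
    (hκ : Measurable κ) (hκK : ∀ x, κ x ≤ K)
    (hlt : ∀ k < K, μ.real {x | κ x = k} = γ ^ k - γ ^ (k + 1))
    (hK : μ.real {x | κ x = K} = γ ^ K) {k : ℕ} (hk : k ≤ K) :
    μ.real {x | k ≤ κ x} = γ ^ k := by
  induction hk using Nat.decreasingInduction with
  | self =>
    have htop : {x | K ≤ κ x} = {x | κ x = K} := by
      ext x; simp only [Set.mem_ofPred_eq]; have := hκK x; omega
    rw [htop, hK]
  | of_succ k hk ih =>
    have hsplit : {x | k ≤ κ x} = {x | κ x = k} ∪ {x | k + 1 ≤ κ x} := by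
      ext x; simp only [Set.mem_ofPred_eq, Set.mem_union]; omega
    have hdisj : Disjoint {x | κ x = k} {x | k + 1 ≤ κ x} :=
      Set.disjoint_left.2 fun x h1 h2 => by simp only [Set.mem_ofPred_eq] at h1 h2; omega
    rw [hsplit, measureReal_union hdisj (hκ measurableSet_Ici), hlt k hk, ih]
    ring

theorem integral_sum_range_succ_eq_sum_pow_mul [IsFiniteMeasure μ] {κ : S → ℕ}
    {Y : ℕ → S → ℝ} {K : ℕ} {γ : ℝ} (hκ : Measurable κ) (hκK : ∀ x, κ x ≤ K)
    (hlt : ∀ k < K, μ.real {x | κ x = k} = γ ^ k - γ ^ (k + 1))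
    (hK : μ.real {x | κ x = K} = γ ^ K) (hY : ∀ k, Integrable (Y k) μ)
    (hind : ∀ k, IndepFun κ (Y k) μ) :
    ∫ x, ∑ k ∈ range (κ x + 1), Y k x ∂μ = ∑ k ∈ range (K + 1), γ ^ k * ∫ x, Y k x ∂μ := by
  rw [integral_sum_range_succ_eq_sum_measureReal_le_mul hκ hκK hY hind]
  refine sum_congr rfl fun k hk => ?_
  rw [measureReal_le_eq_pow hκ hκK hlt hK (Nat.lt_succ_iff.1 (mem_range.1 hk))]

end

theorem stmt19_general
    {S : Type*} [MeasurableSpace S] (μ : Measure S) [IsProbabilityMeasure μ]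
    (K : ℕ) (m b0 γ : ℝ) (hm : 1 < m) (hb0 : 1 ≤ b0) (hγ0 : 0 ≤ γ) (hγ1 : γ < 1)
    (v : ℕ → ℝ)
    (B : ℕ → S → ℝ) (κ : S → ℕ)
    (hκmeas : Measurable κ)
    (hBint : ∀ k, Integrable (B k) μ)
    (hB2int : ∀ k, Integrable (fun x => (B k x) ^ 2) μ)
    (hBmean : ∀ k, ∫ x, B k x ∂μ = b0 * m ^ k - 1 / 2)
    (hB2 : ∀ k, ∫ x, (B k x) ^ 2 ∂μ = (1 + (v k) ^ 2) * (b0 * m ^ k - 1 / 2) ^ 2)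
    (hκle : ∀ x, κ x ≤ K)
    (hκdist : ∀ k, k < K → μ {x | κ x = k} = ENNReal.ofReal (γ ^ k - γ ^ (k + 1)))
    (hκK : μ {x | κ x = K} = ENNReal.ofReal (γ ^ K))
    (hBindep : ProbabilityTheory.iIndepFun B μ)
    (hκindep : ProbabilityTheory.IndepFun κ (fun x k => B k x) μ) :
    ((∫ x, (∑ k ∈ Finset.range (κ x + 1), B k x) ^ 2 ∂μ)
        - (∫ x, ∑ k ∈ Finset.range (κ x + 1), B k x ∂μ) ^ 2)
      / (∫ x, ∑ k ∈ Finset.range (κ x + 1), B k x ∂μ) ^ 2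
    = (∑ k ∈ Finset.range (K + 1),
        (b0 * m ^ k - 1 / 2) * γ ^ k
          * (((m + 1) / (m - 1) + (v k) ^ 2) * (b0 * m ^ k - 1 / 2)
              - (k : ℝ) - (2 * b0 - 1) / (m - 1)))
      / (∑ k ∈ Finset.range (K + 1), (b0 * m ^ k - 1 / 2) * γ ^ k) ^ 2 - 1 := by
  have hlt : ∀ k < K, μ.real {x | κ x = k} = γ ^ k - γ ^ (k + 1) := fun k hk => by
    rw [measureReal_def, hκdist k hk, ENNReal.toReal_ofReal
      (sub_nonneg.2 (pow_le_pow_of_le_one hγ0 hγ1.le k.le_succ))]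
  have hK : μ.real {x | κ x = K} = γ ^ K := by
    rw [measureReal_def, hκK, ENNReal.toReal_ofReal (pow_nonneg hγ0 K)]
  have hmean : ∫ x, ∑ k ∈ range (κ x + 1), B k x ∂μ
      = ∑ k ∈ range (K + 1), (b0 * m ^ k - 1 / 2) * γ ^ k := by
    rw [integral_sum_range_succ_eq_sum_pow_mul hκmeas hκle hlt hK hBint
      fun k => hκindep.comp measurable_id (measurable_pi_apply k)]
    exact sum_congr rfl fun k _ => by rw [hBmean, mul_comm]
  have hsecond : ∫ x, (∑ k ∈ range (κ x + 1), B k x) ^ 2 ∂μ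
      = ∑ k ∈ range (K + 1), (b0 * m ^ k - 1 / 2) * γ ^ k
          * (((m + 1) / (m - 1) + (v k) ^ 2) * (b0 * m ^ k - 1 / 2)
              - (k : ℝ) - (2 * b0 - 1) / (m - 1)) := by
    simp_rw [sq_sum_range_eq_sum_mul]
    rw [integral_sum_range_succ_eq_sum_pow_mul hκmeas hκle hlt hK
      (hBindep.integrable_mul_two_mul_sum_range_add hBint hB2int) fun k =>
        hκindep.comp (ψ := fun f : ℕ → ℝ => f k * (2 * ∑ l ∈ range k, f l + f k)) measurable_id
          (by fun_prop)]
    refine sum_congr rfl fun k _ => ?_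
    simp_rw [hBindep.integral_mul_two_mul_sum_range_add hBint hB2int, hB2, hBmean,
      two_mul_mul_sum_add_sq_eq b0 m (v k) hm.ne']
    ring
  have hpos : 0 < ∑ k ∈ range (K + 1), (b0 * m ^ k - 1 / 2) * γ ^ k := by
    refine sum_pos' (fun k _ => mul_nonneg ?_ (pow_nonneg hγ0 k))
      ⟨0, by simp, by rw [pow_zero, pow_zero, mul_one, mul_one]; linarith⟩
    nlinarith [one_le_pow₀ (M₀ := ℝ) hm.le (n := k)]
  rw [hmean, hsecond, sub_div, div_self (pow_ne_zero 2 hpos.ne')]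

theorem stmt19
    {S : Type*} [MeasurableSpace S] (μ : Measure S) [IsProbabilityMeasure μ]
    (K : ℕ) (m b0 γ : ℝ) (hm : 1 < m) (hb0 : 1 ≤ b0) (hγ0 : 0 ≤ γ) (hγ1 : γ < 1)
    (v : ℕ → ℝ)
    (B : ℕ → S → ℝ) (κ : S → ℕ)
    (hBmeas : ∀ k, Measurable (B k)) (hκmeas : Measurable κ)
    (hBpos : ∀ k x, 0 ≤ B k x)
    (hBint : ∀ k, Integrable (B k) μ)
    (hB2int : ∀ k, Integrable (fun x => (B k x) ^ 2) μ)
    (hBmean : ∀ k, ∫ x, B k x ∂μ = b0 * m ^ k - 1 / 2)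
    (hB2 : ∀ k, ∫ x, (B k x) ^ 2 ∂μ = (1 + (v k) ^ 2) * (b0 * m ^ k - 1 / 2) ^ 2)
    (hκle : ∀ x, κ x ≤ K)
    (hκdist : ∀ k, k < K → μ {x | κ x = k} = ENNReal.ofReal (γ ^ k - γ ^ (k + 1)))
    (hκK : μ {x | κ x = K} = ENNReal.ofReal (γ ^ K))
    (hBindep : ProbabilityTheory.iIndepFun B μ)
    (hκindep : ProbabilityTheory.IndepFun κ (fun x k => B k x) μ) :
    ((∫ x, (∑ k ∈ Finset.range (κ x + 1), B k x) ^ 2 ∂μ)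
        - (∫ x, ∑ k ∈ Finset.range (κ x + 1), B k x ∂μ) ^ 2)
      / (∫ x, ∑ k ∈ Finset.range (κ x + 1), B k x ∂μ) ^ 2
    = (∑ k ∈ Finset.range (K + 1),
        (b0 * m ^ k - 1 / 2) * γ ^ k
          * (((m + 1) / (m - 1) + (v k) ^ 2) * (b0 * m ^ k - 1 / 2)
              - (k : ℝ) - (2 * b0 - 1) / (m - 1)))
      / (∑ k ∈ Finset.range (K + 1), (b0 * m ^ k - 1 / 2) * γ ^ k) ^ 2 - 1 :=
  stmt19_general μ K m b0 γ hm hb0 hγ0 hγ1 v B κ hκmeas hBint hB2int hBmean hB2 hκle hκdist hκK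
    hBindep hκindep
end
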